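/- arXiv:2504.15576 — 3 statements merged into one kernel-verified Lean document; each statement's English description precedes it below -/
import Mathlib

section
/- The 6×6 complex Hadamard matrix M₁ = [[i,1,1,1,1,1],[1,i,1,1,-1,-1],[1,1,i,-1,1,-1],[1,1,-1,i,-1,1],[1,-1,1,-1,i,1],[1,-1,-1,1,1,i]] is complex equivalent to the matrix D₀ = [[1,1,1,1,1,1],[1,-1,i,-i,-i,i],[1,i,-1,i,-i,-i],[1,-i,i,-1,i,-i],[1,-i,-i,i,-1,i],[1,i,-i,-i,i,-1]]. -/
open Complex Matrix
open scoped Classical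

noncomputable section

/-- An `n × n` complex Hadamard matrix: all entries of modulus one and `H Hᴴ = n • 1`. -/
def IsCHM {n : ℕ} (H : Matrix (Fin n) (Fin n) ℂ) : Prop :=
  (∀ i j, ‖H i j‖ = 1) ∧ H * H.conjTranspose = (n : ℂ) • 1

/-- A permutation matrix. -/
def IsPermMatrix {n : ℕ} (P : Matrix (Fin n) (Fin n) ℂ) : Prop :=
  ∃ σ : Equiv.Perm (Fin n), ∀ i j, P i j = if σ i = j then 1 else 0

/-- A diagonal unitary matrix. -/
def IsDiagUnitary {n : ℕ} (D : Matrix (Fin n) (Fin n) ℂ) : Prop :=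
  D.IsDiag ∧ D ∈ Matrix.unitaryGroup (Fin n) ℂ

/-- Complex equivalence of matrices: `H' = D₁ P₁ H P₂ D₂` for permutation matrices
`P₁, P₂` and diagonal unitary matrices `D₁, D₂`. -/
def ComplexEquiv {n : ℕ} (H H' : Matrix (Fin n) (Fin n) ℂ) : Prop :=
  ∃ D₁ P₁ P₂ D₂ : Matrix (Fin n) (Fin n) ℂ,
    IsDiagUnitary D₁ ∧ IsDiagUnitary D₂ ∧ IsPermMatrix P₁ ∧ IsPermMatrix P₂ ∧
    H' = D₁ * P₁ * H * P₂ * D₂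

/-- Two 6×6 CHMs are mutually unbiased if every entry of `H₁ᴴ H₂` has modulus `√6`. -/
def IsMU (H₁ H₂ : Matrix (Fin 6) (Fin 6) ℂ) : Prop :=
  ∀ i j, ‖(H₁.conjTranspose * H₂) i j‖ = Real.sqrt 6

/-- `H` belongs to a CHM trio: there are CHMs `K₁, K₂` so that `H, K₁, K₂` are pairwise MU. -/
def MemCHMTrio (H : Matrix (Fin 6) (Fin 6) ℂ) : Prop :=
  ∃ K₁ K₂ : Matrix (Fin 6) (Fin 6) ℂ, IsCHM K₁ ∧ IsCHM K₂ ∧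
    IsMU H K₁ ∧ IsMU H K₂ ∧ IsMU K₁ K₂

/-- The 2×2 submatrix of `H` on rows `r₁, r₂` and columns `c₁, c₂` is proportional to a
2×2 complex Hadamard matrix. -/
def IsSubCHM (H : Matrix (Fin 6) (Fin 6) ℂ) (r₁ r₂ c₁ c₂ : Fin 6) : Prop :=
  H r₁ c₁ * (starRingEnd ℂ) (H r₂ c₁) + H r₁ c₂ * (starRingEnd ℂ) (H r₂ c₂) = 0

/-- The number `N(H)` of 2×2 sub-CHMs of `H`, counted over unordered pairs of rows and
unordered pairs of columns. -/
def numSubCHM (H : Matrix (Fin 6) (Fin 6) ℂ) : ℕ :=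
  ((Finset.univ : Finset ((Fin 6 × Fin 6) × (Fin 6 × Fin 6))).filter
    (fun p => p.1.1 < p.1.2 ∧ p.2.1 < p.2.2 ∧ IsSubCHM H p.1.1 p.1.2 p.2.1 p.2.2)).card

/-- `H` is H₂-reducible: complex equivalent to a CHM in which each of the nine 2×2 blocks
on the row/column pairs `{1,2}, {3,4}, {5,6}` is a 2×2 sub-CHM. -/
def IsH2Reducible (H : Matrix (Fin 6) (Fin 6) ℂ) : Prop :=
  ∃ H' : Matrix (Fin 6) (Fin 6) ℂ, IsCHM H' ∧ ComplexEquiv H H' ∧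
    ∀ k l : Fin 3,
      IsSubCHM H' ⟨2 * k.val, by have := k.isLt; omega⟩ ⟨2 * k.val + 1, by have := k.isLt; omega⟩
        ⟨2 * l.val, by have := l.isLt; omega⟩ ⟨2 * l.val + 1, by have := l.isLt; omega⟩

/-- The number of real entries of `H`. -/
def numRealEntries (H : Matrix (Fin 6) (Fin 6) ℂ) : ℕ :=
  ((Finset.univ : Finset (Fin 6 × Fin 6)).filter (fun p => (H p.1 p.2).im = 0)).card

/-- `H` contains a 3×2 real submatrix of rank two. -/
def HasReal3x2Rank2 (H : Matrix (Fin 6) (Fin 6) ℂ) : Prop :=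
  ∃ (r : Fin 3 → Fin 6) (c : Fin 2 → Fin 6),
    Function.Injective r ∧ Function.Injective c ∧
    (∀ i j, (H (r i) (c j)).im = 0) ∧
    (Matrix.of fun i j => H (r i) (c j)).rank = 2

def M₁ : Matrix (Fin 6) (Fin 6) ℂ :=
  !![I, 1, 1, 1, 1, 1;
     1, I, 1, 1, -1, -1;
     1, 1, I, -1, 1, -1;
     1, 1, -1, I, -1, 1;
     1, -1, 1, -1, I, 1;
     1, -1, -1, 1, 1, I]

def M₂ (ω : ℂ) : Matrix (Fin 6) (Fin 6) ℂ :=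
  !![ω, ω, 1, 1, 1, 1;
     ω, -ω, -1, 1, -1, 1;
     1, 1, ω, ω, 1, 1;
     1, -1, -ω, ω, -1, 1;
     1, 1, 1, 1, ω, ω;
     -1, 1, 1, -1, ω, -ω]

def D₀ : Matrix (Fin 6) (Fin 6) ℂ :=
  !![1, 1, 1, 1, 1, 1;
     1, -1, I, -I, -I, I;
     1, I, -1, I, -I, -I;
     1, -I, I, -1, I, -I;
     1, -I, -I, I, -1, I;
     1, I, -I, -I, I, -1]

def ω₁ : ℂ := Complex.exp (2 * Real.pi * I / 3)

def ω₂ : ℂ := Complex.exp (4 * Real.pi * I / 3)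

/-- The function `f(x₁, x₂)` from the paper's family `H(x₁, x₂)`. -/
def fFun (x₁ x₂ : ℝ) : ℂ :=
  Complex.exp (I * (x₁ + x₂) / 2) *
    ((Real.cos ((x₁ - x₂) / 2) : ℂ) - I * (Real.sin ((x₁ + x₂) / 2) : ℂ)) *
    (1 / 2 + I * (Real.sqrt (1 / (1 + Real.sin x₁ * Real.sin x₂) - 1 / 4) : ℂ))

/-- The family `H(x₁, x₂)` of 6×6 complex Hadamard matrices. -/
def Hmat (x₁ x₂ : ℝ) : Matrix (Fin 6) (Fin 6) ℂ :=
  let z₁ : ℂ := Complex.exp (I * x₁)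
  let z₂ : ℂ := Complex.exp (I * x₂)
  let f₁ := fFun x₁ x₂
  let f₂ := fFun x₁ (-x₂)
  let f₃ := fFun (-x₁) (-x₂)
  let f₄ := fFun (-x₁) x₂
  !![1, 1, 1, 1, 1, 1;
     1, -1, z₁, -z₁, z₁, -z₁;
     1, z₂, -f₁, -z₂ * f₂, -(starRingEnd ℂ) f₃, -z₂ * (starRingEnd ℂ) f₄;
     1, -z₂, -z₁ * (starRingEnd ℂ) f₂, z₁ * z₂ * (starRingEnd ℂ) f₁, -z₁ * f₄, z₁ * z₂ * f₃;
     1, z₂, -(starRingEnd ℂ) f₃, -z₂ * (starRingEnd ℂ) f₄, -f₁, -z₂ * f₂;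
     1, -z₂, -z₁ * f₄, z₁ * z₂ * f₃, -z₁ * (starRingEnd ℂ) f₂, z₁ * z₂ * (starRingEnd ℂ) f₁]



section vecEval
variable {α : Type*}
lemma cv61 (a : α) (s : Fin 5 → α) : Matrix.vecCons a s (1 : Fin 6) = s 0 := rfl
lemma cv62 (a : α) (s : Fin 5 → α) : Matrix.vecCons a s (2 : Fin 6) = s 1 := rfl
lemma cv63 (a : α) (s : Fin 5 → α) : Matrix.vecCons a s (3 : Fin 6) = s 2 := rfl
lemma cv64 (a : α) (s : Fin 5 → α) : Matrix.vecCons a s (4 : Fin 6) = s 3 := rfl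
lemma cv65 (a : α) (s : Fin 5 → α) : Matrix.vecCons a s (5 : Fin 6) = s 4 := rfl
lemma cv51 (a : α) (s : Fin 4 → α) : Matrix.vecCons a s (1 : Fin 5) = s 0 := rfl
lemma cv52 (a : α) (s : Fin 4 → α) : Matrix.vecCons a s (2 : Fin 5) = s 1 := rfl
lemma cv53 (a : α) (s : Fin 4 → α) : Matrix.vecCons a s (3 : Fin 5) = s 2 := rfl
lemma cv54 (a : α) (s : Fin 4 → α) : Matrix.vecCons a s (4 : Fin 5) = s 3 := rfl
lemma cv41 (a : α) (s : Fin 3 → α) : Matrix.vecCons a s (1 : Fin 4) = s 0 := rfl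
lemma cv42 (a : α) (s : Fin 3 → α) : Matrix.vecCons a s (2 : Fin 4) = s 1 := rfl
lemma cv43 (a : α) (s : Fin 3 → α) : Matrix.vecCons a s (3 : Fin 4) = s 2 := rfl
lemma cv31 (a : α) (s : Fin 2 → α) : Matrix.vecCons a s (1 : Fin 3) = s 0 := rfl
lemma cv32 (a : α) (s : Fin 2 → α) : Matrix.vecCons a s (2 : Fin 3) = s 1 := rfl
lemma cv21 (a : α) (s : Fin 1 → α) : Matrix.vecCons a s (1 : Fin 2) = s 0 := rfl
lemma cv60 (a : α) (s : Fin 5 → α) : Matrix.vecCons a s (0 : Fin 6) = a := rfl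
lemma cv50 (a : α) (s : Fin 4 → α) : Matrix.vecCons a s (0 : Fin 5) = a := rfl
lemma cv40 (a : α) (s : Fin 3 → α) : Matrix.vecCons a s (0 : Fin 4) = a := rfl
lemma cv30 (a : α) (s : Fin 2 → α) : Matrix.vecCons a s (0 : Fin 3) = a := rfl
lemma cv20 (a : α) (s : Fin 1 → α) : Matrix.vecCons a s (0 : Fin 2) = a := rfl
end vecEval

lemma vec6_five {α : Type*} (a b c d e f : α) : ![a,b,c,d,e,f] (5 : Fin 6) = f := rfl

lemma vec6_four {α : Type*} (a b c d e f : α) : ![a,b,c,d,e,f] (4 : Fin 6) = e := rfl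

def σ₀ : Equiv.Perm (Fin 6) :=
  ⟨![0,1,2,4,5,3], ![0,1,2,5,3,4], by decide, by decide⟩

def τ₀ : Equiv.Perm (Fin 6) :=
  ⟨![0,1,2,5,3,4], ![0,1,2,4,5,3], by decide, by decide⟩

def dvec : Fin 6 → ℂ := ![-I,1,1,1,1,1]
def evec : Fin 6 → ℂ := ![1,I,I,I,I,I]

lemma permL (σ : Equiv.Perm (Fin 6)) (M : Matrix (Fin 6) (Fin 6) ℂ) :
    (Matrix.of fun i j => if σ i = j then (1:ℂ) else 0) * M = M.submatrix σ id := by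
  ext i j
  simp [Matrix.mul_apply, ite_mul]

lemma permR (τ : Equiv.Perm (Fin 6)) (M : Matrix (Fin 6) (Fin 6) ℂ) :
    M * (Matrix.of fun i j => if τ i = j then (1:ℂ) else 0) = M.submatrix id τ.symm := by
  ext i j
  have h : ∀ k : Fin 6, (τ k = j) = (k = τ.symm j) := by
    intro k; simp [Equiv.eq_symm_apply, eq_comm]
  simp [Matrix.mul_apply, mul_ite, h]

lemma diagU (v : Fin 6 → ℂ) (hv : ∀ i, ‖v i‖ = 1) :
    IsDiagUnitary (Matrix.diagonal v) := by
  refine ⟨Matrix.isDiag_diagonal v, ?_⟩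
  rw [Matrix.mem_unitaryGroup_iff, Matrix.star_eq_conjTranspose, Matrix.diagonal_conjTranspose,
    Matrix.diagonal_mul_diagonal]
  have hone : ∀ i, v i * (starRingEnd ℂ) (v i) = 1 := fun i => by
    rw [Complex.mul_conj, Complex.normSq_eq_norm_sq, hv i]
    norm_num
  ext i j
  rcases eq_or_ne i j with rfl | hij
  · simp [Matrix.diagonal_apply_eq, hone i]
  · simp [Matrix.diagonal_apply_ne _ hij, Matrix.one_apply_ne hij]

/-- `M₁` is complex equivalent to `D₀`. -/
theorem stmt_1 : ComplexEquiv M₁ D₀ := by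
  refine ⟨Matrix.diagonal dvec,
    Matrix.of fun i j => if σ₀ i = j then (1:ℂ) else 0,
    Matrix.of fun i j => if τ₀ i = j then (1:ℂ) else 0,
    Matrix.diagonal evec,
    diagU dvec (by intro i; fin_cases i <;> simp [dvec, vec6_five, vec6_four]), diagU evec (by intro i; fin_cases i <;> simp [evec, vec6_five, vec6_four]),
    ⟨σ₀, fun i j => rfl⟩, ⟨τ₀, fun i j => rfl⟩, ?_⟩
  rw [mul_assoc (Matrix.diagonal dvec), permL, permR]
  ext i j
  fin_cases i <;> fin_cases j <;>
    simp [Matrix.mul_apply, Fin.sum_univ_six, Matrix.diagonal, Matrix.submatrix,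
      σ₀, τ₀, dvec, evec, M₁, D₀, Matrix.one_apply, cv60, cv61, cv62, cv63, cv64, cv65, cv50, cv51, cv52, cv53, cv54, cv40, cv41, cv42, cv43, cv30, cv31, cv32, cv20, cv21, Matrix.vecHead, Matrix.vecTail]
end
end

section
/- For all x₁, x₂ with −π/2 < x₁ ≤ π/2 and −π/2 < x₂ ≤ π/2, the matrix H(x₁,x₂) has at least seventeen 2×2 sub-CHMs: N(H(x₁,x₂)) ≥ 17. -/
open Complex Matrix
open scoped Classical

noncomputable section

/-- for all `−π/2 < x₁ ≤ π/2` and `−π/2 < x₂ ≤ π/2`, the matrix `H(x₁,x₂)`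
has at least seventeen 2×2 sub-CHMs. -/
theorem stmt_9 (x₁ x₂ : ℝ) (h₁ : -(Real.pi / 2) < x₁ ∧ x₁ ≤ Real.pi / 2)
    (h₂ : -(Real.pi / 2) < x₂ ∧ x₂ ≤ Real.pi / 2) : 17 ≤ numSubCHM (Hmat x₁ x₂) := by
  have hz : Complex.exp (I * (x₂:ℂ)) * (starRingEnd ℂ) (Complex.exp (I * (x₂:ℂ))) = 1 := by
    rw [← Complex.exp_conj, ← Complex.exp_add]
    simp
  have h0 : IsSubCHM (Hmat x₁ x₂) 0 1 0 1 := by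
    show ((1:ℂ)) * (starRingEnd ℂ) ((1:ℂ)) + ((1:ℂ)) * (starRingEnd ℂ) (-(1:ℂ)) = 0
    simp only [_root_.map_mul, _root_.map_neg, _root_.map_one, Complex.conj_conj]
    ring
  have h1 : IsSubCHM (Hmat x₁ x₂) 0 1 2 3 := by
    show ((1:ℂ)) * (starRingEnd ℂ) (Complex.exp (I * (x₁:ℂ))) + ((1:ℂ)) * (starRingEnd ℂ) (-(Complex.exp (I * (x₁:ℂ)))) = 0
    simp only [_root_.map_mul, _root_.map_neg, _root_.map_one, Complex.conj_conj]
    ring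
  have h2 : IsSubCHM (Hmat x₁ x₂) 0 1 2 5 := by
    show ((1:ℂ)) * (starRingEnd ℂ) (Complex.exp (I * (x₁:ℂ))) + ((1:ℂ)) * (starRingEnd ℂ) (-(Complex.exp (I * (x₁:ℂ)))) = 0
    simp only [_root_.map_mul, _root_.map_neg, _root_.map_one, Complex.conj_conj]
    ring
  have h3 : IsSubCHM (Hmat x₁ x₂) 0 1 3 4 := by
    show ((1:ℂ)) * (starRingEnd ℂ) (-(Complex.exp (I * (x₁:ℂ)))) + ((1:ℂ)) * (starRingEnd ℂ) (Complex.exp (I * (x₁:ℂ))) = 0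
    simp only [_root_.map_mul, _root_.map_neg, _root_.map_one, Complex.conj_conj]
    ring
  have h4 : IsSubCHM (Hmat x₁ x₂) 0 1 4 5 := by
    show ((1:ℂ)) * (starRingEnd ℂ) (Complex.exp (I * (x₁:ℂ))) + ((1:ℂ)) * (starRingEnd ℂ) (-(Complex.exp (I * (x₁:ℂ)))) = 0
    simp only [_root_.map_mul, _root_.map_neg, _root_.map_one, Complex.conj_conj]
    ring
  have h5 : IsSubCHM (Hmat x₁ x₂) 2 3 0 1 := by
    show ((1:ℂ)) * (starRingEnd ℂ) ((1:ℂ)) + (Complex.exp (I * (x₂:ℂ))) * (starRingEnd ℂ) (-(Complex.exp (I * (x₂:ℂ)))) = 0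
    simp only [_root_.map_mul, _root_.map_neg, _root_.map_one, Complex.conj_conj]
    linear_combination -hz
  have h6 : IsSubCHM (Hmat x₁ x₂) 2 3 2 3 := by
    show (-(fFun x₁ x₂)) * (starRingEnd ℂ) (-(Complex.exp (I * (x₁:ℂ))) * (starRingEnd ℂ) (fFun x₁ (-x₂))) + (-(Complex.exp (I * (x₂:ℂ))) * (fFun x₁ (-x₂))) * (starRingEnd ℂ) ((Complex.exp (I * (x₁:ℂ))) * (Complex.exp (I * (x₂:ℂ))) * (starRingEnd ℂ) (fFun x₁ x₂)) = 0
    simp only [_root_.map_mul, _root_.map_neg, _root_.map_one, Complex.conj_conj]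
    linear_combination (-((starRingEnd ℂ) (Complex.exp (I * (x₁:ℂ))) * (fFun x₁ x₂) * (fFun x₁ (-x₂)))) * hz
  have h7 : IsSubCHM (Hmat x₁ x₂) 2 3 4 5 := by
    show (-((starRingEnd ℂ) (fFun (-x₁) (-x₂)))) * (starRingEnd ℂ) (-(Complex.exp (I * (x₁:ℂ))) * (fFun (-x₁) x₂)) + (-(Complex.exp (I * (x₂:ℂ))) * (starRingEnd ℂ) (fFun (-x₁) x₂)) * (starRingEnd ℂ) ((Complex.exp (I * (x₁:ℂ))) * (Complex.exp (I * (x₂:ℂ))) * (fFun (-x₁) (-x₂))) = 0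
    simp only [_root_.map_mul, _root_.map_neg, _root_.map_one, Complex.conj_conj]
    linear_combination (-((starRingEnd ℂ) (Complex.exp (I * (x₁:ℂ))) * (starRingEnd ℂ) (fFun (-x₁) (-x₂)) * (starRingEnd ℂ) (fFun (-x₁) x₂))) * hz
  have h8 : IsSubCHM (Hmat x₁ x₂) 2 5 0 1 := by
    show ((1:ℂ)) * (starRingEnd ℂ) ((1:ℂ)) + (Complex.exp (I * (x₂:ℂ))) * (starRingEnd ℂ) (-(Complex.exp (I * (x₂:ℂ)))) = 0
    simp only [_root_.map_mul, _root_.map_neg, _root_.map_one, Complex.conj_conj]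
    linear_combination -hz
  have h9 : IsSubCHM (Hmat x₁ x₂) 2 5 2 5 := by
    show (-(fFun x₁ x₂)) * (starRingEnd ℂ) (-(Complex.exp (I * (x₁:ℂ))) * (fFun (-x₁) x₂)) + (-(Complex.exp (I * (x₂:ℂ))) * (starRingEnd ℂ) (fFun (-x₁) x₂)) * (starRingEnd ℂ) ((Complex.exp (I * (x₁:ℂ))) * (Complex.exp (I * (x₂:ℂ))) * (starRingEnd ℂ) (fFun x₁ x₂)) = 0
    simp only [_root_.map_mul, _root_.map_neg, _root_.map_one, Complex.conj_conj]
    linear_combination (-((starRingEnd ℂ) (Complex.exp (I * (x₁:ℂ))) * (fFun x₁ x₂) * (starRingEnd ℂ) (fFun (-x₁) x₂))) * hz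
  have h10 : IsSubCHM (Hmat x₁ x₂) 2 5 3 4 := by
    show (-(Complex.exp (I * (x₂:ℂ))) * (fFun x₁ (-x₂))) * (starRingEnd ℂ) ((Complex.exp (I * (x₁:ℂ))) * (Complex.exp (I * (x₂:ℂ))) * (fFun (-x₁) (-x₂))) + (-((starRingEnd ℂ) (fFun (-x₁) (-x₂)))) * (starRingEnd ℂ) (-(Complex.exp (I * (x₁:ℂ))) * (starRingEnd ℂ) (fFun x₁ (-x₂))) = 0
    simp only [_root_.map_mul, _root_.map_neg, _root_.map_one, Complex.conj_conj]
    linear_combination (-((starRingEnd ℂ) (Complex.exp (I * (x₁:ℂ))) * (fFun x₁ (-x₂)) * (starRingEnd ℂ) (fFun (-x₁) (-x₂)))) * hz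
  have h11 : IsSubCHM (Hmat x₁ x₂) 3 4 0 1 := by
    show ((1:ℂ)) * (starRingEnd ℂ) ((1:ℂ)) + (-(Complex.exp (I * (x₂:ℂ)))) * (starRingEnd ℂ) (Complex.exp (I * (x₂:ℂ))) = 0
    simp only [_root_.map_mul, _root_.map_neg, _root_.map_one, Complex.conj_conj]
    linear_combination -hz
  have h12 : IsSubCHM (Hmat x₁ x₂) 3 4 2 5 := by
    show (-(Complex.exp (I * (x₁:ℂ))) * (starRingEnd ℂ) (fFun x₁ (-x₂))) * (starRingEnd ℂ) (-((starRingEnd ℂ) (fFun (-x₁) (-x₂)))) + ((Complex.exp (I * (x₁:ℂ))) * (Complex.exp (I * (x₂:ℂ))) * (fFun (-x₁) (-x₂))) * (starRingEnd ℂ) (-(Complex.exp (I * (x₂:ℂ))) * (fFun x₁ (-x₂))) = 0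
    simp only [_root_.map_mul, _root_.map_neg, _root_.map_one, Complex.conj_conj]
    linear_combination (-((Complex.exp (I * (x₁:ℂ))) * (starRingEnd ℂ) (fFun x₁ (-x₂)) * (fFun (-x₁) (-x₂)))) * hz
  have h13 : IsSubCHM (Hmat x₁ x₂) 3 4 3 4 := by
    show ((Complex.exp (I * (x₁:ℂ))) * (Complex.exp (I * (x₂:ℂ))) * (starRingEnd ℂ) (fFun x₁ x₂)) * (starRingEnd ℂ) (-(Complex.exp (I * (x₂:ℂ))) * (starRingEnd ℂ) (fFun (-x₁) x₂)) + (-(Complex.exp (I * (x₁:ℂ))) * (fFun (-x₁) x₂)) * (starRingEnd ℂ) (-(fFun x₁ x₂)) = 0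
    simp only [_root_.map_mul, _root_.map_neg, _root_.map_one, Complex.conj_conj]
    linear_combination (-((Complex.exp (I * (x₁:ℂ))) * (starRingEnd ℂ) (fFun x₁ x₂) * (fFun (-x₁) x₂))) * hz
  have h14 : IsSubCHM (Hmat x₁ x₂) 4 5 0 1 := by
    show ((1:ℂ)) * (starRingEnd ℂ) ((1:ℂ)) + (Complex.exp (I * (x₂:ℂ))) * (starRingEnd ℂ) (-(Complex.exp (I * (x₂:ℂ)))) = 0
    simp only [_root_.map_mul, _root_.map_neg, _root_.map_one, Complex.conj_conj]
    linear_combination -hz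
  have h15 : IsSubCHM (Hmat x₁ x₂) 4 5 2 3 := by
    show (-((starRingEnd ℂ) (fFun (-x₁) (-x₂)))) * (starRingEnd ℂ) (-(Complex.exp (I * (x₁:ℂ))) * (fFun (-x₁) x₂)) + (-(Complex.exp (I * (x₂:ℂ))) * (starRingEnd ℂ) (fFun (-x₁) x₂)) * (starRingEnd ℂ) ((Complex.exp (I * (x₁:ℂ))) * (Complex.exp (I * (x₂:ℂ))) * (fFun (-x₁) (-x₂))) = 0
    simp only [_root_.map_mul, _root_.map_neg, _root_.map_one, Complex.conj_conj]
    linear_combination (-((starRingEnd ℂ) (Complex.exp (I * (x₁:ℂ))) * (starRingEnd ℂ) (fFun (-x₁) (-x₂)) * (starRingEnd ℂ) (fFun (-x₁) x₂))) * hz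
  have h16 : IsSubCHM (Hmat x₁ x₂) 4 5 4 5 := by
    show (-(fFun x₁ x₂)) * (starRingEnd ℂ) (-(Complex.exp (I * (x₁:ℂ))) * (starRingEnd ℂ) (fFun x₁ (-x₂))) + (-(Complex.exp (I * (x₂:ℂ))) * (fFun x₁ (-x₂))) * (starRingEnd ℂ) ((Complex.exp (I * (x₁:ℂ))) * (Complex.exp (I * (x₂:ℂ))) * (starRingEnd ℂ) (fFun x₁ x₂)) = 0
    simp only [_root_.map_mul, _root_.map_neg, _root_.map_one, Complex.conj_conj]
    linear_combination (-((starRingEnd ℂ) (Complex.exp (I * (x₁:ℂ))) * (fFun x₁ x₂) * (fFun x₁ (-x₂)))) * hz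
  unfold numSubCHM
  have hsub : ({(((0:Fin 6),(1:Fin 6)),((0:Fin 6),(1:Fin 6))), (((0:Fin 6),(1:Fin 6)),((2:Fin 6),(3:Fin 6))), (((0:Fin 6),(1:Fin 6)),((2:Fin 6),(5:Fin 6))), (((0:Fin 6),(1:Fin 6)),((3:Fin 6),(4:Fin 6))), (((0:Fin 6),(1:Fin 6)),((4:Fin 6),(5:Fin 6))), (((2:Fin 6),(3:Fin 6)),((0:Fin 6),(1:Fin 6))), (((2:Fin 6),(3:Fin 6)),((2:Fin 6),(3:Fin 6))), (((2:Fin 6),(3:Fin 6)),((4:Fin 6),(5:Fin 6))), (((2:Fin 6),(5:Fin 6)),((0:Fin 6),(1:Fin 6))), (((2:Fin 6),(5:Fin 6)),((2:Fin 6),(5:Fin 6))), (((2:Fin 6),(5:Fin 6)),((3:Fin 6),(4:Fin 6))), (((3:Fin 6),(4:Fin 6)),((0:Fin 6),(1:Fin 6))), (((3:Fin 6),(4:Fin 6)),((2:Fin 6),(5:Fin 6))), (((3:Fin 6),(4:Fin 6)),((3:Fin 6),(4:Fin 6))), (((4:Fin 6),(5:Fin 6)),((0:Fin 6),(1:Fin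 6))), (((4:Fin 6),(5:Fin 6)),((2:Fin 6),(3:Fin 6))), (((4:Fin 6),(5:Fin 6)),((4:Fin 6),(5:Fin 6)))} : Finset ((Fin 6 × Fin 6) × (Fin 6 × Fin 6))) ⊆
      (Finset.univ.filter
        (fun p => p.1.1 < p.1.2 ∧ p.2.1 < p.2.2 ∧ IsSubCHM (Hmat x₁ x₂) p.1.1 p.1.2 p.2.1 p.2.2)) := by
    intro p hp
    fin_cases hp <;>
      refine Finset.mem_filter.2 ⟨Finset.mem_univ _, by decide, by decide, ?_⟩
    exacts [h0, h1, h2, h3, h4, h5, h6, h7, h8, h9, h10, h11, h12, h13, h14, h15, h16]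
  calc (17:ℕ) = ({(((0:Fin 6),(1:Fin 6)),((0:Fin 6),(1:Fin 6))), (((0:Fin 6),(1:Fin 6)),((2:Fin 6),(3:Fin 6))), (((0:Fin 6),(1:Fin 6)),((2:Fin 6),(5:Fin 6))), (((0:Fin 6),(1:Fin 6)),((3:Fin 6),(4:Fin 6))), (((0:Fin 6),(1:Fin 6)),((4:Fin 6),(5:Fin 6))), (((2:Fin 6),(3:Fin 6)),((0:Fin 6),(1:Fin 6))), (((2:Fin 6),(3:Fin 6)),((2:Fin 6),(3:Fin 6))), (((2:Fin 6),(3:Fin 6)),((4:Fin 6),(5:Fin 6))), (((2:Fin 6),(5:Fin 6)),((0:Fin 6),(1:Fin 6))), (((2:Fin 6),(5:Fin 6)),((2:Fin 6),(5:Fin 6))), (((2:Fin 6),(5:Fin 6)),((3:Fin 6),(4:Fin 6))), (((3:Fin 6),(4:Fin 6)),((0:Fin 6),(1:Fin 6))), (((3:Fin 6),(4:Fin 6)),((2:Fin 6),(5:Fin 6))), (((3:Fin 6),(4:Fin 6)),((3:Fin 6),(4:Fin 6))), (((4:Fin 6),(5:Fin 6)),((0:Fin 6),(1:Fin 6))),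 (((4:Fin 6),(5:Fin 6)),((2:Fin 6),(3:Fin 6))), (((4:Fin 6),(5:Fin 6)),((4:Fin 6),(5:Fin 6)))} : Finset ((Fin 6 × Fin 6) × (Fin 6 × Fin 6))).card := by decide
    _ ≤ _ := Finset.card_le_card hsub
end
end

section
/- Let H be a 6×6 complex Hadamard matrix that is complex equivalent to a matrix containing a 3×2 real submatrix of rank two (i.e., there exist three rows and two columns such that the corresponding six entries are all real and the resulting 3×2 matrix has rank two). Then H has more than nine 2×2 sub-CHMs: N(H) > 9 (and hence N(H) ≥ 17). -/
open Complex Matrix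
open scoped Classical

noncomputable section

open ComplexConjugate

namespace S13

/-- sorted pair -/
def oq (a b : Fin 6) : Fin 6 × Fin 6 := if a < b then (a, b) else (b, a)

lemma oq_lt {a b : Fin 6} (h : a ≠ b) : (oq a b).1 < (oq a b).2 := by
  unfold oq
  rcases lt_or_gt_of_ne h with h' | h'
  · simp [h']
  · simp [not_lt.mpr (le_of_lt h'), h']

lemma oq_cases (a b : Fin 6) : oq a b = (a, b) ∨ oq a b = (b, a) := by
  unfold oq; split <;> simp

lemma oq_eq_or {a b c d : Fin 6} (h : oq a b = oq c d) :
    (a = c ∧ b = d) ∨ (a = d ∧ b = c) := by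
  rcases oq_cases a b with h1 | h1 <;> rcases oq_cases c d with h2 | h2 <;>
    rw [h1, h2] at h <;> simp [Prod.ext_iff] at h <;> tauto

lemma oq_ne {a b c d : Fin 6} (h : ¬(a = c ∧ b = d)) (h' : ¬(a = d ∧ b = c)) :
    oq a b ≠ oq c d := fun he => (oq_eq_or he).elim h h'

/-- four unimodular numbers summing to zero pair up antipodally -/
lemma four_units {u v w x : ℂ} (hu : u * conj u = 1) (hv : v * conj v = 1)
    (hw : w * conj w = 1) (hx : x * conj x = 1) (hsum : u + v + w + x = 0) :
    v = -u ∨ w = -u ∨ x = -u := by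
  by_cases hv' : v = -u
  · exact Or.inl hv'
  have hs : u + v ≠ 0 := fun h => hv' (by linear_combination h)
  have e1 : (conj u + conj v) * (u * v) = u + v := by linear_combination v * hu + u * hv
  have e2 : (conj w + conj x) * (w * x) = w + x := by linear_combination x * hw + w * hx
  have hcwx : conj w + conj x = -(conj u + conj v) := by
    have : w + x = -(u + v) := by linear_combination hsum
    calc conj w + conj x = conj (w + x) := by rw [map_add]
    _ = conj (-(u+v)) := by rw [this]
    _ = -(conj u + conj v) := by rw [map_neg, map_add]
  have e3 : (conj u + conj v) * (u * v - w * x) = 0 := by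
    linear_combination e1 + e2 - w * x * hcwx + hsum
  have hne : conj u + conj v ≠ 0 := by
    intro h0
    apply hs
    have := congrArg conj h0
    simpa [map_add, Complex.conj_conj] using this
  have huvwx : u * v = w * x := by
    have := mul_eq_zero.mp e3
    rcases this with h | h
    · exact absurd h hne
    · linear_combination h
  have h2 : (u + w) * (v + w) = 0 := by linear_combination huvwx + w * hsum
  rcases mul_eq_zero.mp h2 with h | h
  · exact Or.inr (Or.inl (by linear_combination h))
  · exact Or.inr (Or.inr (by linear_combination hsum - h))

/-- product of a unit and conj of a unit is a unit -/
lemma unit_mul {x y : ℂ} (h1 : x * conj x = 1) (h2 : y * conj y = 1) :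
    (x * conj y) * conj (x * conj y) = 1 := by
  simp only [_root_.map_mul, Complex.conj_conj]
  linear_combination (y * conj y) * h1 + h2

/-- for unimodular entries: `a c̄ + b d̄ = 0 ↔ a b̄ + c d̄ = 0` (2×2 row/col symmetry) -/
lemma swap_cols {a b c d : ℂ} (ha : a * conj a = 1) (hb : b * conj b = 1)
    (hc : c * conj c = 1) (hd : d * conj d = 1)
    (h : a * conj c + b * conj d = 0) : a * conj b + c * conj d = 0 := by
  have k : a * d + b * c = 0 := by
    linear_combination c * d * h - a * d * hc - b * c * hd
  linear_combination conj b * conj d * k - a * conj b * hd - c * conj d * hb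

lemma sum_six (f : Fin 6 → ℂ) (a b c d e g : Fin 6)
    (hab : a ≠ b) (hac : a ≠ c) (had : a ≠ d) (hae : a ≠ e) (hag : a ≠ g)
    (hbc : b ≠ c) (hbd : b ≠ d) (hbe : b ≠ e) (hbg : b ≠ g)
    (hcd : c ≠ d) (hce : c ≠ e) (hcg : c ≠ g)
    (hde : d ≠ e) (hdg : d ≠ g) (heg : e ≠ g) :
    ∑ i, f i = f a + f b + f c + f d + f e + f g := by
  have huniv : (Finset.univ : Finset (Fin 6)) = {a, b, c, d, e, g} := by
    symm
    apply Finset.eq_univ_of_card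
    rw [Finset.card_insert_of_notMem (by simp [hab, hac, had, hae, hag]),
      Finset.card_insert_of_notMem (by simp [hbc, hbd, hbe, hbg]),
      Finset.card_insert_of_notMem (by simp [hcd, hce, hcg]),
      Finset.card_insert_of_notMem (by simp [hde, hdg]),
      Finset.card_insert_of_notMem (by simp [heg]), Finset.card_singleton]
    rfl
  rw [huniv,
    Finset.sum_insert (by simp [hab, hac, had, hae, hag]),
    Finset.sum_insert (by simp [hbc, hbd, hbe, hbg]),
    Finset.sum_insert (by simp [hcd, hce, hcg]),
    Finset.sum_insert (by simp [hde, hdg]),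
    Finset.sum_insert (by simp [heg]), Finset.sum_singleton]
  ring

lemma peel {s : Finset (Fin 6)} (h : 1 ≤ s.card) : ∃ m, m ∈ s := by
  have h' : 0 < s.card := by omega
  obtain ⟨m, hm⟩ := Finset.card_pos.mp h'
  exact ⟨m, hm⟩

lemma three_of_card {s : Finset (Fin 6)} (h : 3 ≤ s.card) :
    ∃ m1 m2 m3, m1 ∈ s ∧ m2 ∈ s ∧ m3 ∈ s ∧ m1 ≠ m2 ∧ m1 ≠ m3 ∧ m2 ≠ m3 := by
  obtain ⟨m1, h1⟩ := peel (s := s) (by omega)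
  have c1 : 2 ≤ (s.erase m1).card := by rw [Finset.card_erase_of_mem h1]; omega
  obtain ⟨m2, h2⟩ := peel (s := s.erase m1) (by omega)
  have c2 : 1 ≤ ((s.erase m1).erase m2).card := by
    rw [Finset.card_erase_of_mem h2]; omega
  obtain ⟨m3, h3⟩ := peel (s := (s.erase m1).erase m2) (by omega)
  simp only [Finset.mem_erase] at h2 h3
  exact ⟨m1, m2, m3, h1, h2.2, h3.2.2,
    fun h => h2.1 h.symm, fun h => h3.2.1 h.symm, fun h => h3.1 h.symm⟩

lemma four_of_card {s : Finset (Fin 6)} (h : 4 ≤ s.card) :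
    ∃ m1 m2 m3 m4, m1 ∈ s ∧ m2 ∈ s ∧ m3 ∈ s ∧ m4 ∈ s ∧
      m1 ≠ m2 ∧ m1 ≠ m3 ∧ m1 ≠ m4 ∧ m2 ≠ m3 ∧ m2 ≠ m4 ∧ m3 ≠ m4 := by
  obtain ⟨m1, h1⟩ := peel (s := s) (by omega)
  have c1 : 3 ≤ (s.erase m1).card := by rw [Finset.card_erase_of_mem h1]; omega
  obtain ⟨m2, h2⟩ := peel (s := s.erase m1) (by omega)
  have c2 : 2 ≤ ((s.erase m1).erase m2).card := by
    rw [Finset.card_erase_of_mem h2]; omega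
  obtain ⟨m3, h3⟩ := peel (s := (s.erase m1).erase m2) (by omega)
  have c3 : 1 ≤ (((s.erase m1).erase m2).erase m3).card := by
    rw [Finset.card_erase_of_mem h3]; omega
  obtain ⟨m4, h4⟩ := peel (s := ((s.erase m1).erase m2).erase m3) (by omega)
  simp only [Finset.mem_erase] at h2 h3 h4
  exact ⟨m1, m2, m3, m4, h1, h2.2, h3.2.2, h4.2.2.2,
    fun h => h2.1 h.symm, fun h => h3.2.1 h.symm, fun h => h4.2.2.1 h.symm,
    fun h => h3.1 h.symm, fun h => h4.2.1 h.symm, fun h => h4.1 h.symm⟩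

lemma exists_other_four (a b : Fin 6) (hab : a ≠ b) : ∃ m1 m2 m3 m4 : Fin 6,
    (m1 ≠ a ∧ m1 ≠ b ∧ m2 ≠ a ∧ m2 ≠ b ∧ m3 ≠ a ∧ m3 ≠ b ∧ m4 ≠ a ∧ m4 ≠ b) ∧
    (m1 ≠ m2 ∧ m1 ≠ m3 ∧ m1 ≠ m4 ∧ m2 ≠ m3 ∧ m2 ≠ m4 ∧ m3 ≠ m4) := by
  have hcard : 4 ≤ (({a, b} : Finset (Fin 6))ᶜ).card := by
    rw [Finset.card_compl,
      Finset.card_insert_of_notMem (by simp [hab]), Finset.card_singleton, Fintype.card_fin]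
  obtain ⟨m1, m2, m3, m4, h1, h2, h3, h4, hd⟩ := four_of_card hcard
  simp only [Finset.mem_compl, Finset.mem_insert, Finset.mem_singleton, not_or] at h1 h2 h3 h4
  exact ⟨m1, m2, m3, m4, ⟨h1.1, h1.2, h2.1, h2.2, h3.1, h3.2, h4.1, h4.2⟩, hd⟩

lemma exists_other_three (a b c : Fin 6) (hab : a ≠ b) (hac : a ≠ c) (hbc : b ≠ c) :
    ∃ d e g : Fin 6,
    (d ≠ a ∧ d ≠ b ∧ d ≠ c ∧ e ≠ a ∧ e ≠ b ∧ e ≠ c ∧ g ≠ a ∧ g ≠ b ∧ g ≠ c) ∧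
    (d ≠ e ∧ d ≠ g ∧ e ≠ g) := by
  have hcard : 3 ≤ (({a, b, c} : Finset (Fin 6))ᶜ).card := by
    rw [Finset.card_compl,
      Finset.card_insert_of_notMem (by simp [hab, hac]),
      Finset.card_insert_of_notMem (by simp [hbc]), Finset.card_singleton,
      Fintype.card_fin]
  obtain ⟨d, e, g, h1, h2, h3, hde, hdg, heg⟩ := three_of_card hcard
  simp only [Finset.mem_compl, Finset.mem_insert, Finset.mem_singleton, not_or] at h1 h2 h3
  exact ⟨d, e, g, ⟨h1.1, h1.2.1, h1.2.2, h2.1, h2.2.1, h2.2.2, h3.1, h3.2.1, h3.2.2⟩,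
    hde, hdg, heg⟩

lemma three_le_card {α : Type*} [DecidableEq α] {s : Finset α} {x y z : α}
    (hx : x ∈ s) (hy : y ∈ s) (hz : z ∈ s)
    (hxy : x ≠ y) (hxz : x ≠ z) (hyz : y ≠ z) : 3 ≤ s.card := by
  have hsub : ({x, y, z} : Finset α) ⊆ s := by
    intro t ht
    simp only [Finset.mem_insert, Finset.mem_singleton] at ht
    rcases ht with h | h | h <;> subst h <;> assumption
  have := Finset.card_le_card hsub
  rw [Finset.card_insert_of_notMem (by simp [hxy, hxz]),
    Finset.card_insert_of_notMem (by simp [hyz]), Finset.card_singleton] at this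
  omega

lemma five_le_card {α : Type*} [DecidableEq α] {s : Finset α} {x y z u v : α}
    (hx : x ∈ s) (hy : y ∈ s) (hz : z ∈ s) (hu : u ∈ s) (hv : v ∈ s)
    (hxy : x ≠ y) (hxz : x ≠ z) (hxu : x ≠ u) (hxv : x ≠ v)
    (hyz : y ≠ z) (hyu : y ≠ u) (hyv : y ≠ v)
    (hzu : z ≠ u) (hzv : z ≠ v) (huv : u ≠ v) : 5 ≤ s.card := by
  have hsub : ({x, y, z, u, v} : Finset α) ⊆ s := by
    intro t ht
    simp only [Finset.mem_insert, Finset.mem_singleton] at ht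
    rcases ht with h | h | h | h | h <;> subst h <;> assumption
  have := Finset.card_le_card hsub
  rw [Finset.card_insert_of_notMem (by simp [hxy, hxz, hxu, hxv]),
    Finset.card_insert_of_notMem (by simp [hyz, hyu, hyv]),
    Finset.card_insert_of_notMem (by simp [hzu, hzv]),
    Finset.card_insert_of_notMem (by simp [huv]), Finset.card_singleton] at this
  omega

section counts
variable {β : Type*} [DecidableEq β] [Fintype β]

lemma count5 (S : Finset (β × β)) (q1 q2 q3 q4 q5 : β) (a1 a2 a3 a4 a5 : ℕ)
    (h12 : q1 ≠ q2) (h13 : q1 ≠ q3) (h14 : q1 ≠ q4) (h15 : q1 ≠ q5)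
    (h23 : q2 ≠ q3) (h24 : q2 ≠ q4) (h25 : q2 ≠ q5)
    (h34 : q3 ≠ q4) (h35 : q3 ≠ q5) (h45 : q4 ≠ q5)
    (b1 : a1 ≤ (S.filter (fun p => p.1 = q1)).card)
    (b2 : a2 ≤ (S.filter (fun p => p.1 = q2)).card)
    (b3 : a3 ≤ (S.filter (fun p => p.1 = q3)).card)
    (b4 : a4 ≤ (S.filter (fun p => p.1 = q4)).card)
    (b5 : a5 ≤ (S.filter (fun p => p.1 = q5)).card) :
    a1 + a2 + a3 + a4 + a5 ≤ S.card := by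
  have key : S.card = ∑ q ∈ (Finset.univ : Finset β), (S.filter (fun p => p.1 = q)).card :=
    Finset.card_eq_sum_card_fiberwise (fun p _ => Finset.mem_univ p.1)
  have hsub : ∑ q ∈ ({q1, q2, q3, q4, q5} : Finset β), (S.filter (fun p => p.1 = q)).card
      ≤ ∑ q ∈ (Finset.univ : Finset β), (S.filter (fun p => p.1 = q)).card :=
    Finset.sum_le_sum_of_subset (Finset.subset_univ _)
  rw [Finset.sum_insert (by simp [h12, h13, h14, h15]),
    Finset.sum_insert (by simp [h23, h24, h25]),
    Finset.sum_insert (by simp [h34, h35]),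
    Finset.sum_insert (by simp [h45]), Finset.sum_singleton] at hsub
  omega

lemma count6 (S : Finset (β × β)) (q1 q2 q3 q4 q5 q6 : β)
    (h12 : q1 ≠ q2) (h13 : q1 ≠ q3) (h14 : q1 ≠ q4) (h15 : q1 ≠ q5) (h16 : q1 ≠ q6)
    (h23 : q2 ≠ q3) (h24 : q2 ≠ q4) (h25 : q2 ≠ q5) (h26 : q2 ≠ q6)
    (h34 : q3 ≠ q4) (h35 : q3 ≠ q5) (h36 : q3 ≠ q6)
    (h45 : q4 ≠ q5) (h46 : q4 ≠ q6) (h56 : q5 ≠ q6)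
    (b1 : 3 ≤ (S.filter (fun p => p.1 = q1)).card)
    (b2 : 3 ≤ (S.filter (fun p => p.1 = q2)).card)
    (b3 : 3 ≤ (S.filter (fun p => p.1 = q3)).card)
    (b4 : 3 ≤ (S.filter (fun p => p.1 = q4)).card)
    (b5 : 3 ≤ (S.filter (fun p => p.1 = q5)).card)
    (b6 : 3 ≤ (S.filter (fun p => p.1 = q6)).card) :
    17 ≤ S.card := by
  have key : S.card = ∑ q ∈ (Finset.univ : Finset β), (S.filter (fun p => p.1 = q)).card :=
    Finset.card_eq_sum_card_fiberwise (fun p _ => Finset.mem_univ p.1)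
  have hsub : ∑ q ∈ ({q1, q2, q3, q4, q5, q6} : Finset β), (S.filter (fun p => p.1 = q)).card
      ≤ ∑ q ∈ (Finset.univ : Finset β), (S.filter (fun p => p.1 = q)).card :=
    Finset.sum_le_sum_of_subset (Finset.subset_univ _)
  rw [Finset.sum_insert (by simp [h12, h13, h14, h15, h16]),
    Finset.sum_insert (by simp [h23, h24, h25, h26]),
    Finset.sum_insert (by simp [h34, h35, h36]),
    Finset.sum_insert (by simp [h45, h46]),
    Finset.sum_insert (by simp [h56]), Finset.sum_singleton] at hsub
  omega

end counts


variable {G : Matrix (Fin 6) (Fin 6) ℂ}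

/-- row-pair products -/
abbrev rp (G : Matrix (Fin 6) (Fin 6) ℂ) (i j k : Fin 6) : ℂ := G i k * conj (G j k)
/-- column-pair products -/
abbrev cp (G : Matrix (Fin 6) (Fin 6) ℂ) (k l i : Fin 6) : ℂ := G i k * conj (G i l)

/-- the finset of sub-CHMs -/
def Sset (G : Matrix (Fin 6) (Fin 6) ℂ) : Finset ((Fin 6 × Fin 6) × (Fin 6 × Fin 6)) :=
  (Finset.univ.filter
    (fun p => p.1.1 < p.1.2 ∧ p.2.1 < p.2.2 ∧ IsSubCHM G p.1.1 p.1.2 p.2.1 p.2.2))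

lemma numSubCHM_eq (G : Matrix (Fin 6) (Fin 6) ℂ) : numSubCHM G = (Sset G).card := rfl

lemma isSubCHM_iff_rp (i j k l : Fin 6) :
    IsSubCHM G i j k l ↔ rp G i j k + rp G i j l = 0 := Iff.rfl

lemma isSubCHM_rowswap {i j k l : Fin 6} (h : IsSubCHM G i j k l) : IsSubCHM G j i k l := by
  unfold IsSubCHM at h ⊢
  have := congrArg conj h
  simp only [map_add, _root_.map_mul, Complex.conj_conj, map_zero] at this
  linear_combination this

lemma isSubCHM_colswap {i j k l : Fin 6} (h : IsSubCHM G i j k l) : IsSubCHM G i j l k := by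
  unfold IsSubCHM at h ⊢
  linear_combination h

lemma mem_S {i j k l : Fin 6} (hij : i ≠ j) (hkl : k ≠ l) (h : IsSubCHM G i j k l) :
    ((oq i j), (oq k l)) ∈ Sset G := by
  refine Finset.mem_filter.mpr ⟨Finset.mem_univ _, oq_lt hij, oq_lt hkl, ?_⟩
  rcases oq_cases i j with h1 | h1 <;> rcases oq_cases k l with h2 | h2 <;> rw [h1, h2]
  · exact h
  · exact isSubCHM_colswap h
  · exact isSubCHM_rowswap h
  · exact isSubCHM_rowswap (isSubCHM_colswap h)

lemma mem_fiber {i j k l : Fin 6} (hij : i ≠ j) (hkl : k ≠ l) (h : IsSubCHM G i j k l) :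
    ((oq i j), (oq k l)) ∈ (Sset G).filter (fun p => p.1 = oq i j) :=
  Finset.mem_filter.mpr ⟨mem_S hij hkl h, rfl⟩

lemma pair_ne_snd {q : Fin 6 × Fin 6} {x y : Fin 6 × Fin 6} (h : x ≠ y) :
    (q, x) ≠ (q, y) := by simp [Prod.ext_iff, h]

lemma fiber_three (hG1 : ∀ i j, G i j * conj (G i j) = 1)
    (hG2 : ∀ i j, i ≠ j → ∑ k, G i k * conj (G j k) = 0)
    {i j k l : Fin 6} (hij : i ≠ j) (hkl : k ≠ l) (h : IsSubCHM G i j k l) :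
    3 ≤ ((Sset G).filter (fun p => p.1 = oq i j)).card := by
  obtain ⟨m1, m2, m3, m4, ⟨n1a, n1b, n2a, n2b, n3a, n3b, n4a, n4b⟩,
    d12, d13, d14, d23, d24, d34⟩ := exists_other_four k l hkl
  have hs := hG2 i j hij
  rw [sum_six (fun c => G i c * conj (G j c)) k l m1 m2 m3 m4 hkl
    (Ne.symm n1a) (Ne.symm n2a) (Ne.symm n3a) (Ne.symm n4a)
    (Ne.symm n1b) (Ne.symm n2b) (Ne.symm n3b) (Ne.symm n4b)
    d12 d13 d14 d23 d24 d34] at hs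
  have hh : rp G i j k + rp G i j l = 0 := h
  have h4 : rp G i j m1 + rp G i j m2 + rp G i j m3 + rp G i j m4 = 0 := by
    linear_combination hs - hh
  have hu : ∀ m, rp G i j m * conj (rp G i j m) = 1 := fun m => unit_mul (hG1 i m) (hG1 j m)
  rcases four_units (hu m1) (hu m2) (hu m3) (hu m4) h4 with hc | hc | hc
  · have p1 : IsSubCHM G i j m1 m2 := by rw [isSubCHM_iff_rp]; linear_combination hc
    have p2 : IsSubCHM G i j m3 m4 := by rw [isSubCHM_iff_rp]; linear_combination h4 - hc
    exact three_le_card (mem_fiber hij hkl h) (mem_fiber hij d12 p1) (mem_fiber hij d34 p2)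
      (pair_ne_snd (oq_ne (by rintro ⟨h1, h2⟩; exact n1a h1.symm)
        (by rintro ⟨h1, h2⟩; exact n2a h1.symm)))
      (pair_ne_snd (oq_ne (by rintro ⟨h1, h2⟩; exact n3a h1.symm)
        (by rintro ⟨h1, h2⟩; exact n4a h1.symm)))
      (pair_ne_snd (oq_ne (by rintro ⟨h1, h2⟩; exact d13 h1)
        (by rintro ⟨h1, h2⟩; exact d14 h1)))
  · have p1 : IsSubCHM G i j m1 m3 := by rw [isSubCHM_iff_rp]; linear_combination hc
    have p2 : IsSubCHM G i j m2 m4 := by rw [isSubCHM_iff_rp]; linear_combination h4 - hc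
    exact three_le_card (mem_fiber hij hkl h) (mem_fiber hij d13 p1) (mem_fiber hij d24 p2)
      (pair_ne_snd (oq_ne (by rintro ⟨h1, h2⟩; exact n1a h1.symm)
        (by rintro ⟨h1, h2⟩; exact n3a h1.symm)))
      (pair_ne_snd (oq_ne (by rintro ⟨h1, h2⟩; exact n2a h1.symm)
        (by rintro ⟨h1, h2⟩; exact n4a h1.symm)))
      (pair_ne_snd (oq_ne (by rintro ⟨h1, h2⟩; exact d12 h1)
        (by rintro ⟨h1, h2⟩; exact d14 h1)))
  · have p1 : IsSubCHM G i j m1 m4 := by rw [isSubCHM_iff_rp]; linear_combination hc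
    have p2 : IsSubCHM G i j m2 m3 := by rw [isSubCHM_iff_rp]; linear_combination h4 - hc
    exact three_le_card (mem_fiber hij hkl h) (mem_fiber hij d14 p1) (mem_fiber hij d23 p2)
      (pair_ne_snd (oq_ne (by rintro ⟨h1, h2⟩; exact n1a h1.symm)
        (by rintro ⟨h1, h2⟩; exact n4a h1.symm)))
      (pair_ne_snd (oq_ne (by rintro ⟨h1, h2⟩; exact n2a h1.symm)
        (by rintro ⟨h1, h2⟩; exact n3a h1.symm)))
      (pair_ne_snd (oq_ne (by rintro ⟨h1, h2⟩; exact d12 h1)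
        (by rintro ⟨h1, h2⟩; exact d13 h1)))

lemma cp_to_sub (hG1 : ∀ i j, G i j * conj (G i j) = 1) {i j k l : Fin 6}
    (h : cp G k l i + cp G k l j = 0) : IsSubCHM G i j k l :=
  swap_cols (hG1 i k) (hG1 j k) (hG1 i l) (hG1 j l) h

lemma sub_to_cp (hG1 : ∀ i j, G i j * conj (G i j) = 1) {i j k l : Fin 6}
    (h : IsSubCHM G i j k l) : cp G k l i + cp G k l j = 0 :=
  swap_cols (hG1 i k) (hG1 i l) (hG1 j k) (hG1 j l) h

lemma cp_chain (hG1 : ∀ i j, G i j * conj (G i j) = 1) (k l n i : Fin 6) :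
    cp G k l i * cp G l n i = cp G k n i := by
  show (G i k * conj (G i l)) * (G i l * conj (G i n)) = G i k * conj (G i n)
  linear_combination (G i k * conj (G i n)) * hG1 i l

lemma cp_conjs (k l i : Fin 6) : cp G l k i = conj (cp G k l i) := by
  show G i l * conj (G i k) = conj (G i k * conj (G i l))
  simp only [_root_.map_mul, Complex.conj_conj]
  ring

/-- exit: a sixth row pair with some sub-CHM gives `N ≥ 18 ≥ 17`. -/
lemma exit_six (hG1 : ∀ i j, G i j * conj (G i j) = 1)
    (hG2 : ∀ i j, i ≠ j → ∑ k, G i k * conj (G j k) = 0)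
    (a0 a1 a2 a3 a4 a5 : Fin 6)
    (r01 : a0 ≠ a1) (r02 : a0 ≠ a2) (r03 : a0 ≠ a3) (r04 : a0 ≠ a4) (r05 : a0 ≠ a5)
    (r12 : a1 ≠ a2) (r13 : a1 ≠ a3) (r14 : a1 ≠ a4) (r15 : a1 ≠ a5)
    (r23 : a2 ≠ a3) (r24 : a2 ≠ a4) (r25 : a2 ≠ a5)
    (r34 : a3 ≠ a4) (r35 : a3 ≠ a5) (r45 : a4 ≠ a5)
    (c0 c1 : Fin 6) (hc01 : c0 ≠ c1)
    (e02 : IsSubCHM G a0 a2 c0 c1) (e03 : IsSubCHM G a0 a3 c0 c1)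
    (e12 : IsSubCHM G a1 a2 c0 c1) (e13 : IsSubCHM G a1 a3 c0 c1)
    (e45 : IsSubCHM G a4 a5 c0 c1)
    (x y : Fin 6) (hxy : x ≠ y) (k l : Fin 6) (hkl : k ≠ l)
    (hsub : IsSubCHM G x y k l)
    (hk1 : oq a0 a2 ≠ oq x y) (hk2 : oq a0 a3 ≠ oq x y)
    (hk3 : oq a1 a2 ≠ oq x y) (hk4 : oq a1 a3 ≠ oq x y) (hk5 : oq a4 a5 ≠ oq x y) :
    17 ≤ numSubCHM G := by
  rw [numSubCHM_eq]
  exact count6 (Sset G) (oq a0 a2) (oq a0 a3) (oq a1 a2) (oq a1 a3) (oq a4 a5) (oq x y)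
    (oq_ne (by rintro ⟨h1, h2⟩; exact r23 h2) (by rintro ⟨h1, h2⟩; exact r03 h1))
    (oq_ne (by rintro ⟨h1, h2⟩; exact r01 h1) (by rintro ⟨h1, h2⟩; exact r02 h1))
    (oq_ne (by rintro ⟨h1, h2⟩; exact r01 h1) (by rintro ⟨h1, h2⟩; exact r03 h1))
    (oq_ne (by rintro ⟨h1, h2⟩; exact r04 h1) (by rintro ⟨h1, h2⟩; exact r05 h1))
    hk1
    (oq_ne (by rintro ⟨h1, h2⟩; exact r01 h1) (by rintro ⟨h1, h2⟩; exact r02 h1))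
    (oq_ne (by rintro ⟨h1, h2⟩; exact r01 h1) (by rintro ⟨h1, h2⟩; exact r03 h1))
    (oq_ne (by rintro ⟨h1, h2⟩; exact r04 h1) (by rintro ⟨h1, h2⟩; exact r05 h1))
    hk2
    (oq_ne (by rintro ⟨h1, h2⟩; exact r23 h2) (by rintro ⟨h1, h2⟩; exact r13 h1))
    (oq_ne (by rintro ⟨h1, h2⟩; exact r14 h1) (by rintro ⟨h1, h2⟩; exact r15 h1))
    hk3
    (oq_ne (by rintro ⟨h1, h2⟩; exact r14 h1) (by rintro ⟨h1, h2⟩; exact r15 h1))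
    hk4 hk5
    (fiber_three hG1 hG2 r02 hc01 e02)
    (fiber_three hG1 hG2 r03 hc01 e03)
    (fiber_three hG1 hG2 r12 hc01 e12)
    (fiber_three hG1 hG2 r13 hc01 e13)
    (fiber_three hG1 hG2 r45 hc01 e45)
    (fiber_three hG1 hG2 hxy hkl hsub)

/-- exit: the pair `(a4,a5)` with five sub-CHM column pairs gives `N ≥ 17`. -/
lemma exit_five (hG1 : ∀ i j, G i j * conj (G i j) = 1)
    (hG2 : ∀ i j, i ≠ j → ∑ k, G i k * conj (G j k) = 0)
    (a0 a1 a2 a3 a4 a5 : Fin 6)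
    (r01 : a0 ≠ a1) (r02 : a0 ≠ a2) (r03 : a0 ≠ a3) (r04 : a0 ≠ a4) (r05 : a0 ≠ a5)
    (r12 : a1 ≠ a2) (r13 : a1 ≠ a3) (r14 : a1 ≠ a4) (r15 : a1 ≠ a5)
    (r23 : a2 ≠ a3) (r24 : a2 ≠ a4) (r25 : a2 ≠ a5)
    (r34 : a3 ≠ a4) (r35 : a3 ≠ a5) (r45 : a4 ≠ a5)
    (c0 c1 : Fin 6) (hc01 : c0 ≠ c1)
    (e02 : IsSubCHM G a0 a2 c0 c1) (e03 : IsSubCHM G a0 a3 c0 c1)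
    (e12 : IsSubCHM G a1 a2 c0 c1) (e13 : IsSubCHM G a1 a3 c0 c1)
    (k1 l1 k2 l2 k3 l3 k4 l4 k5 l5 : Fin 6)
    (d1 : k1 ≠ l1) (d2 : k2 ≠ l2) (d3 : k3 ≠ l3) (d4 : k4 ≠ l4) (d5 : k5 ≠ l5)
    (s1 : IsSubCHM G a4 a5 k1 l1) (s2 : IsSubCHM G a4 a5 k2 l2)
    (s3 : IsSubCHM G a4 a5 k3 l3) (s4 : IsSubCHM G a4 a5 k4 l4)
    (s5 : IsSubCHM G a4 a5 k5 l5)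
    (o12 : oq k1 l1 ≠ oq k2 l2) (o13 : oq k1 l1 ≠ oq k3 l3) (o14 : oq k1 l1 ≠ oq k4 l4)
    (o15 : oq k1 l1 ≠ oq k5 l5) (o23 : oq k2 l2 ≠ oq k3 l3) (o24 : oq k2 l2 ≠ oq k4 l4)
    (o25 : oq k2 l2 ≠ oq k5 l5) (o34 : oq k3 l3 ≠ oq k4 l4) (o35 : oq k3 l3 ≠ oq k5 l5)
    (o45 : oq k4 l4 ≠ oq k5 l5) :
    17 ≤ numSubCHM G := by
  rw [numSubCHM_eq]
  have b5 : 5 ≤ ((Sset G).filter (fun p => p.1 = oq a4 a5)).card :=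
    five_le_card (mem_fiber r45 d1 s1) (mem_fiber r45 d2 s2) (mem_fiber r45 d3 s3)
      (mem_fiber r45 d4 s4) (mem_fiber r45 d5 s5)
      (pair_ne_snd o12) (pair_ne_snd o13) (pair_ne_snd o14) (pair_ne_snd o15)
      (pair_ne_snd o23) (pair_ne_snd o24) (pair_ne_snd o25)
      (pair_ne_snd o34) (pair_ne_snd o35) (pair_ne_snd o45)
  have h17 := count5 (Sset G) (oq a0 a2) (oq a0 a3) (oq a1 a2) (oq a1 a3) (oq a4 a5)
    3 3 3 3 5
    (oq_ne (by rintro ⟨h1, h2⟩; exact r23 h2) (by rintro ⟨h1, h2⟩; exact r03 h1))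
    (oq_ne (by rintro ⟨h1, h2⟩; exact r01 h1) (by rintro ⟨h1, h2⟩; exact r02 h1))
    (oq_ne (by rintro ⟨h1, h2⟩; exact r01 h1) (by rintro ⟨h1, h2⟩; exact r03 h1))
    (oq_ne (by rintro ⟨h1, h2⟩; exact r04 h1) (by rintro ⟨h1, h2⟩; exact r05 h1))
    (oq_ne (by rintro ⟨h1, h2⟩; exact r01 h1) (by rintro ⟨h1, h2⟩; exact r02 h1))
    (oq_ne (by rintro ⟨h1, h2⟩; exact r01 h1) (by rintro ⟨h1, h2⟩; exact r03 h1))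
    (oq_ne (by rintro ⟨h1, h2⟩; exact r04 h1) (by rintro ⟨h1, h2⟩; exact r05 h1))
    (oq_ne (by rintro ⟨h1, h2⟩; exact r23 h2) (by rintro ⟨h1, h2⟩; exact r13 h1))
    (oq_ne (by rintro ⟨h1, h2⟩; exact r14 h1) (by rintro ⟨h1, h2⟩; exact r15 h1))
    (oq_ne (by rintro ⟨h1, h2⟩; exact r14 h1) (by rintro ⟨h1, h2⟩; exact r15 h1))
    (fiber_three hG1 hG2 r02 hc01 e02)
    (fiber_three hG1 hG2 r03 hc01 e03)
    (fiber_three hG1 hG2 r12 hc01 e12)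
    (fiber_three hG1 hG2 r13 hc01 e13)
    b5
  omega

lemma cp_unit (hG1 : ∀ i j, G i j * conj (G i j) = 1) (k l i : Fin 6) :
    cp G k l i * conj (cp G k l i) = 1 := unit_mul (hG1 i k) (hG1 i l)

/-- stage 3: the pair `(a0,a3)` cancels on `(m1,m3)`. -/
lemma stage3 (hG1 : ∀ i j, G i j * conj (G i j) = 1)
    (hG2 : ∀ i j, i ≠ j → ∑ k, G i k * conj (G j k) = 0)
    (hG3 : ∀ k l, k ≠ l → ∑ i, G i k * conj (G i l) = 0)
    (a0 a1 a2 a3 a4 a5 : Fin 6)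
    (r01 : a0 ≠ a1) (r02 : a0 ≠ a2) (r03 : a0 ≠ a3) (r04 : a0 ≠ a4) (r05 : a0 ≠ a5)
    (r12 : a1 ≠ a2) (r13 : a1 ≠ a3) (r14 : a1 ≠ a4) (r15 : a1 ≠ a5)
    (r23 : a2 ≠ a3) (r24 : a2 ≠ a4) (r25 : a2 ≠ a5)
    (r34 : a3 ≠ a4) (r35 : a3 ≠ a5) (r45 : a4 ≠ a5)
    (c0 c1 m1 m2 m3 m4 : Fin 6)
    (hc01 : c0 ≠ c1) (hcm1 : c0 ≠ m1) (hcm2 : c0 ≠ m2) (hcm3 : c0 ≠ m3) (hcm4 : c0 ≠ m4)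
    (hdm1 : c1 ≠ m1) (hdm2 : c1 ≠ m2) (hdm3 : c1 ≠ m3) (hdm4 : c1 ≠ m4)
    (hm12 : m1 ≠ m2) (hm13 : m1 ≠ m3) (hm14 : m1 ≠ m4)
    (hm23 : m2 ≠ m3) (hm24 : m2 ≠ m4) (hm34 : m3 ≠ m4)
    (ε β : ℂ)
    (ht0 : cp G c0 c1 a0 = ε) (ht1 : cp G c0 c1 a1 = ε)
    (ht2 : cp G c0 c1 a2 = -ε) (ht3 : cp G c0 c1 a3 = -ε)
    (ht4 : cp G c0 c1 a4 = β) (ht5 : cp G c0 c1 a5 = -β)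
    (hP45 : IsSubCHM G a4 a5 m1 m2) (hQ45 : IsSubCHM G a4 a5 m3 m4)
    (hu2 : IsSubCHM G a0 a3 m1 m3) :
    17 ≤ numSubCHM G := by
  have e02 : IsSubCHM G a0 a2 c0 c1 := cp_to_sub hG1 (by rw [ht0, ht2]; ring)
  have e03 : IsSubCHM G a0 a3 c0 c1 := cp_to_sub hG1 (by rw [ht0, ht3]; ring)
  have e12 : IsSubCHM G a1 a2 c0 c1 := cp_to_sub hG1 (by rw [ht1, ht2]; ring)
  have e13 : IsSubCHM G a1 a3 c0 c1 := cp_to_sub hG1 (by rw [ht1, ht3]; ring)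
  have e45 : IsSubCHM G a4 a5 c0 c1 := cp_to_sub hG1 (by rw [ht4, ht5]; ring)
  have hq03 : cp G m1 m3 a0 + cp G m1 m3 a3 = 0 := sub_to_cp hG1 hu2
  have hsum := hG3 m1 m3 hm13
  rw [sum_six (fun i => G i m1 * conj (G i m3)) a0 a1 a2 a3 a4 a5 r01 r02 r03 r04 r05
    r12 r13 r14 r15 r23 r24 r25 r34 r35 r45] at hsum
  have h4 : cp G m1 m3 a1 + cp G m1 m3 a2 + cp G m1 m3 a4 + cp G m1 m3 a5 = 0 := by
    linear_combination hsum - hq03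
  rcases four_units (cp_unit hG1 m1 m3 a1) (cp_unit hG1 m1 m3 a2)
      (cp_unit hG1 m1 m3 a4) (cp_unit hG1 m1 m3 a5) h4 with hc | hc | hc
  · -- q2 = -q1 : then q4 + q5 = 0, extra column pair (m1,m3) for (a4,a5) : five pairs
    have hq45 : cp G m1 m3 a4 + cp G m1 m3 a5 = 0 := by linear_combination h4 - hc
    have eN : IsSubCHM G a4 a5 m1 m3 := cp_to_sub hG1 hq45
    have hP' : rp G a4 a5 m1 + rp G a4 a5 m2 = 0 := hP45
    have hQ' : rp G a4 a5 m3 + rp G a4 a5 m4 = 0 := hQ45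
    have eN' : rp G a4 a5 m1 + rp G a4 a5 m3 = 0 := eN
    have eM : IsSubCHM G a4 a5 m2 m4 := by
      show rp G a4 a5 m2 + rp G a4 a5 m4 = 0
      linear_combination hP' + hQ' - eN'
    exact exit_five hG1 hG2 a0 a1 a2 a3 a4 a5 r01 r02 r03 r04 r05 r12 r13 r14 r15
      r23 r24 r25 r34 r35 r45 c0 c1 hc01 e02 e03 e12 e13
      c0 c1 m1 m2 m3 m4 m1 m3 m2 m4 hc01 hm12 hm34 hm13 hm24 e45 hP45 hQ45 eN eM
      (oq_ne (by rintro ⟨h1, h2⟩; exact hcm1 h1) (by rintro ⟨h1, h2⟩; exact hcm2 h1))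
      (oq_ne (by rintro ⟨h1, h2⟩; exact hcm3 h1) (by rintro ⟨h1, h2⟩; exact hcm4 h1))
      (oq_ne (by rintro ⟨h1, h2⟩; exact hcm1 h1) (by rintro ⟨h1, h2⟩; exact hcm3 h1))
      (oq_ne (by rintro ⟨h1, h2⟩; exact hcm2 h1) (by rintro ⟨h1, h2⟩; exact hcm4 h1))
      (oq_ne (by rintro ⟨h1, h2⟩; exact hm13 h1) (by rintro ⟨h1, h2⟩; exact hm14 h1))
      (oq_ne (by rintro ⟨h1, h2⟩; exact hm23 h2) (by rintro ⟨h1, h2⟩; exact hm13 h1))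
      (oq_ne (by rintro ⟨h1, h2⟩; exact hm12 h1) (by rintro ⟨h1, h2⟩; exact hm14 h1))
      (oq_ne (by rintro ⟨h1, h2⟩; exact hm13 h1.symm) (by rintro ⟨h1, h2⟩; exact hm14 h2.symm))
      (oq_ne (by rintro ⟨h1, h2⟩; exact hm23 h1.symm) (by rintro ⟨h1, h2⟩; exact hm34 h1))
      (oq_ne (by rintro ⟨h1, h2⟩; exact hm12 h1) (by rintro ⟨h1, h2⟩; exact hm14 h1))
  · -- q4 = -q1 : extra row pair (a1,a4)
    have eX : IsSubCHM G a1 a4 m1 m3 := cp_to_sub hG1 (by linear_combination hc)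
    exact exit_six hG1 hG2 a0 a1 a2 a3 a4 a5 r01 r02 r03 r04 r05 r12 r13 r14 r15
      r23 r24 r25 r34 r35 r45 c0 c1 hc01 e02 e03 e12 e13 e45 a1 a4 r14 m1 m3 hm13 eX
      (oq_ne (by rintro ⟨h1, h2⟩; exact r01 h1) (by rintro ⟨h1, h2⟩; exact r04 h1))
      (oq_ne (by rintro ⟨h1, h2⟩; exact r01 h1) (by rintro ⟨h1, h2⟩; exact r04 h1))
      (oq_ne (by rintro ⟨h1, h2⟩; exact r24 h2) (by rintro ⟨h1, h2⟩; exact r12 h2.symm))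
      (oq_ne (by rintro ⟨h1, h2⟩; exact r34 h2) (by rintro ⟨h1, h2⟩; exact r13 h2.symm))
      (oq_ne (by rintro ⟨h1, h2⟩; exact r14 h1.symm) (by rintro ⟨h1, h2⟩; exact r15 h2.symm))
  · -- q5 = -q1 : extra row pair (a1,a5)
    have eX : IsSubCHM G a1 a5 m1 m3 := cp_to_sub hG1 (by linear_combination hc)
    exact exit_six hG1 hG2 a0 a1 a2 a3 a4 a5 r01 r02 r03 r04 r05 r12 r13 r14 r15
      r23 r24 r25 r34 r35 r45 c0 c1 hc01 e02 e03 e12 e13 e45 a1 a5 r15 m1 m3 hm13 eX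
      (oq_ne (by rintro ⟨h1, h2⟩; exact r01 h1) (by rintro ⟨h1, h2⟩; exact r05 h1))
      (oq_ne (by rintro ⟨h1, h2⟩; exact r01 h1) (by rintro ⟨h1, h2⟩; exact r05 h1))
      (oq_ne (by rintro ⟨h1, h2⟩; exact r25 h2) (by rintro ⟨h1, h2⟩; exact r12 h2.symm))
      (oq_ne (by rintro ⟨h1, h2⟩; exact r35 h2) (by rintro ⟨h1, h2⟩; exact r13 h2.symm))
      (oq_ne (by rintro ⟨h1, h2⟩; exact r14 h1.symm) (by rintro ⟨h1, h2⟩; exact r45 h1))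

lemma cp_eq_to_rp (hG1 : ∀ i j, G i j * conj (G i j) = 1) {i j k l : Fin 6}
    (h : cp G k l i = cp G k l j) : rp G i j k = rp G i j l := by
  show G i k * conj (G j k) = G i l * conj (G j l)
  have h' : G i k * conj (G i l) = G j k * conj (G j l) := h
  linear_combination (conj (G j k) * G i l) * h' - (G i k * conj (G j k)) * hG1 i l +
    (G i l * conj (G j l)) * hG1 j k

/-- after the `s`-pattern `s0=-s2, s1=-s3, s4=-s5` has been established. -/
lemma afterS (hG1 : ∀ i j, G i j * conj (G i j) = 1)
    (hG2 : ∀ i j, i ≠ j → ∑ k, G i k * conj (G j k) = 0)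
    (hG3 : ∀ k l, k ≠ l → ∑ i, G i k * conj (G i l) = 0)
    (a0 a1 a2 a3 a4 a5 : Fin 6)
    (r01 : a0 ≠ a1) (r02 : a0 ≠ a2) (r03 : a0 ≠ a3) (r04 : a0 ≠ a4) (r05 : a0 ≠ a5)
    (r12 : a1 ≠ a2) (r13 : a1 ≠ a3) (r14 : a1 ≠ a4) (r15 : a1 ≠ a5)
    (r23 : a2 ≠ a3) (r24 : a2 ≠ a4) (r25 : a2 ≠ a5)
    (r34 : a3 ≠ a4) (r35 : a3 ≠ a5) (r45 : a4 ≠ a5)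
    (c0 c1 m1 m2 m3 m4 : Fin 6)
    (hc01 : c0 ≠ c1) (hcm1 : c0 ≠ m1) (hcm2 : c0 ≠ m2) (hcm3 : c0 ≠ m3) (hcm4 : c0 ≠ m4)
    (hdm1 : c1 ≠ m1) (hdm2 : c1 ≠ m2) (hdm3 : c1 ≠ m3) (hdm4 : c1 ≠ m4)
    (hm12 : m1 ≠ m2) (hm13 : m1 ≠ m3) (hm14 : m1 ≠ m4)
    (hm23 : m2 ≠ m3) (hm24 : m2 ≠ m4) (hm34 : m3 ≠ m4)
    (ε β : ℂ)
    (ht0 : cp G c0 c1 a0 = ε) (ht1 : cp G c0 c1 a1 = ε)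
    (ht2 : cp G c0 c1 a2 = -ε) (ht3 : cp G c0 c1 a3 = -ε)
    (ht4 : cp G c0 c1 a4 = β) (ht5 : cp G c0 c1 a5 = -β)
    (hP45 : IsSubCHM G a4 a5 m1 m2) (hQ45 : IsSubCHM G a4 a5 m3 m4)
    (hs02 : cp G m1 m2 a0 + cp G m1 m2 a2 = 0)
    (hs13 : cp G m1 m2 a1 + cp G m1 m2 a3 = 0) :
    17 ≤ numSubCHM G := by
  have e02 : IsSubCHM G a0 a2 c0 c1 := cp_to_sub hG1 (by rw [ht0, ht2]; ring)
  have e03 : IsSubCHM G a0 a3 c0 c1 := cp_to_sub hG1 (by rw [ht0, ht3]; ring)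
  have e12 : IsSubCHM G a1 a2 c0 c1 := cp_to_sub hG1 (by rw [ht1, ht2]; ring)
  have e13 : IsSubCHM G a1 a3 c0 c1 := cp_to_sub hG1 (by rw [ht1, ht3]; ring)
  have e45 : IsSubCHM G a4 a5 c0 c1 := cp_to_sub hG1 (by rw [ht4, ht5]; ring)
  have hP45cp : cp G m1 m2 a4 + cp G m1 m2 a5 = 0 := sub_to_cp hG1 hP45
  by_cases hss : cp G m1 m2 a0 + cp G m1 m2 a1 = 0
  · have eX : IsSubCHM G a0 a1 m1 m2 := cp_to_sub hG1 hss
    exact exit_six hG1 hG2 a0 a1 a2 a3 a4 a5 r01 r02 r03 r04 r05 r12 r13 r14 r15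
      r23 r24 r25 r34 r35 r45 c0 c1 hc01 e02 e03 e12 e13 e45 a0 a1 r01 m1 m2 hm12 eX
      (oq_ne (by rintro ⟨h1, h2⟩; exact r12 h2.symm) (by rintro ⟨h1, h2⟩; exact r01 h1))
      (oq_ne (by rintro ⟨h1, h2⟩; exact r13 h2.symm) (by rintro ⟨h1, h2⟩; exact r01 h1))
      (oq_ne (by rintro ⟨h1, h2⟩; exact r01 h1.symm) (by rintro ⟨h1, h2⟩; exact r02 h2.symm))
      (oq_ne (by rintro ⟨h1, h2⟩; exact r01 h1.symm) (by rintro ⟨h1, h2⟩; exact r03 h2.symm))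
      (oq_ne (by rintro ⟨h1, h2⟩; exact r04 h1.symm) (by rintro ⟨h1, h2⟩; exact r14 h1.symm))
  by_cases hEq : cp G m1 m2 a1 = cp G m1 m2 a0
  · -- the σ = 1 case
    by_cases h45a : cp G m1 m2 a4 = cp G m1 m2 a0
    · have eX : IsSubCHM G a0 a5 m1 m2 := cp_to_sub hG1 (by linear_combination hP45cp - h45a)
      exact exit_six hG1 hG2 a0 a1 a2 a3 a4 a5 r01 r02 r03 r04 r05 r12 r13 r14 r15
        r23 r24 r25 r34 r35 r45 c0 c1 hc01 e02 e03 e12 e13 e45 a0 a5 r05 m1 m2 hm12 eX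
        (oq_ne (by rintro ⟨h1, h2⟩; exact r25 h2) (by rintro ⟨h1, h2⟩; exact r05 h1))
        (oq_ne (by rintro ⟨h1, h2⟩; exact r35 h2) (by rintro ⟨h1, h2⟩; exact r05 h1))
        (oq_ne (by rintro ⟨h1, h2⟩; exact r01 h1.symm) (by rintro ⟨h1, h2⟩; exact r15 h1))
        (oq_ne (by rintro ⟨h1, h2⟩; exact r01 h1.symm) (by rintro ⟨h1, h2⟩; exact r15 h1))
        (oq_ne (by rintro ⟨h1, h2⟩; exact r04 h1.symm) (by rintro ⟨h1, h2⟩; exact r45 h1))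
    by_cases h45b : cp G m1 m2 a4 = -cp G m1 m2 a0
    · have eX : IsSubCHM G a0 a4 m1 m2 := cp_to_sub hG1 (by linear_combination h45b)
      exact exit_six hG1 hG2 a0 a1 a2 a3 a4 a5 r01 r02 r03 r04 r05 r12 r13 r14 r15
        r23 r24 r25 r34 r35 r45 c0 c1 hc01 e02 e03 e12 e13 e45 a0 a4 r04 m1 m2 hm12 eX
        (oq_ne (by rintro ⟨h1, h2⟩; exact r24 h2) (by rintro ⟨h1, h2⟩; exact r04 h1))
        (oq_ne (by rintro ⟨h1, h2⟩; exact r34 h2) (by rintro ⟨h1, h2⟩; exact r04 h1))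
        (oq_ne (by rintro ⟨h1, h2⟩; exact r01 h1.symm) (by rintro ⟨h1, h2⟩; exact r14 h1))
        (oq_ne (by rintro ⟨h1, h2⟩; exact r01 h1.symm) (by rintro ⟨h1, h2⟩; exact r14 h1))
        (oq_ne (by rintro ⟨h1, h2⟩; exact r04 h1.symm) (by rintro ⟨h1, h2⟩; exact r05 h2.symm))
    -- O-algebra
    have v1 : cp G m1 m2 a1 = cp G m1 m2 a0 := hEq
    have v2 : cp G m1 m2 a2 = -cp G m1 m2 a0 := by linear_combination hs02
    have v3 : cp G m1 m2 a3 = -cp G m1 m2 a0 := by linear_combination hs13 - hEq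
    have v5 : cp G m1 m2 a5 = -cp G m1 m2 a4 := by linear_combination hP45cp
    have hE1 := hG3 c0 m1 hcm1
    rw [sum_six (fun i => G i c0 * conj (G i m1)) a0 a1 a2 a3 a4 a5 r01 r02 r03 r04 r05
      r12 r13 r14 r15 r23 r24 r25 r34 r35 r45] at hE1
    have hE2 := hG3 c0 m2 hcm2
    rw [sum_six (fun i => G i c0 * conj (G i m2)) a0 a1 a2 a3 a4 a5 r01 r02 r03 r04 r05
      r12 r13 r14 r15 r23 r24 r25 r34 r35 r45] at hE2
    have hE3 := hG3 c1 m1 hdm1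
    rw [sum_six (fun i => G i c1 * conj (G i m1)) a0 a1 a2 a3 a4 a5 r01 r02 r03 r04 r05
      r12 r13 r14 r15 r23 r24 r25 r34 r35 r45] at hE3
    have hE4 := hG3 c1 m2 hdm2
    rw [sum_six (fun i => G i c1 * conj (G i m2)) a0 a1 a2 a3 a4 a5 r01 r02 r03 r04 r05
      r12 r13 r14 r15 r23 r24 r25 r34 r35 r45] at hE4
    have hE1' : cp G c0 m1 a0 + cp G c0 m1 a1 + cp G c0 m1 a2 + cp G c0 m1 a3 +
        cp G c0 m1 a4 + cp G c0 m1 a5 = 0 := hE1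
    have ch2 : ∀ i, cp G c0 m1 i * cp G m1 m2 i = cp G c0 m2 i := cp_chain hG1 c0 m1 m2
    have ch3 : ∀ i, cp G c1 c0 i * cp G c0 m1 i = cp G c1 m1 i := cp_chain hG1 c1 c0 m1
    have ch4 : ∀ i, cp G c1 m1 i * cp G m1 m2 i = cp G c1 m2 i := cp_chain hG1 c1 m1 m2
    have hco : ∀ i, cp G c1 c0 i = conj (cp G c0 c1 i) := fun i => cp_conjs c0 c1 i
    have cw0 : conj (cp G c0 c1 a0) = conj ε := by rw [ht0]
    have cw1 : conj (cp G c0 c1 a1) = conj ε := by rw [ht1]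
    have cw2 : conj (cp G c0 c1 a2) = -conj ε := by rw [ht2, map_neg]
    have cw3 : conj (cp G c0 c1 a3) = -conj ε := by rw [ht3, map_neg]
    have cw4 : conj (cp G c0 c1 a4) = conj β := by rw [ht4]
    have cw5 : conj (cp G c0 c1 a5) = -conj β := by rw [ht5, map_neg]
    have EA : cp G m1 m2 a0 * (cp G c0 m1 a0 + cp G c0 m1 a1 - cp G c0 m1 a2 - cp G c0 m1 a3)
        + cp G m1 m2 a4 * (cp G c0 m1 a4 - cp G c0 m1 a5) = 0 := by
      linear_combination hE2 + ch2 a0 + ch2 a1 + ch2 a2 + ch2 a3 + ch2 a4 + ch2 a5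
        - cp G c0 m1 a1 * v1 - cp G c0 m1 a2 * v2 - cp G c0 m1 a3 * v3 - cp G c0 m1 a5 * v5
    have EB : conj ε * (cp G c0 m1 a0 + cp G c0 m1 a1 - cp G c0 m1 a2 - cp G c0 m1 a3)
        + conj β * (cp G c0 m1 a4 - cp G c0 m1 a5) = 0 := by
      linear_combination hE3 + ch3 a0 + ch3 a1 + ch3 a2 + ch3 a3 + ch3 a4 + ch3 a5
        - cp G c0 m1 a0 * hco a0 - cp G c0 m1 a1 * hco a1 - cp G c0 m1 a2 * hco a2
        - cp G c0 m1 a3 * hco a3 - cp G c0 m1 a4 * hco a4 - cp G c0 m1 a5 * hco a5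
        - cp G c0 m1 a0 * cw0 - cp G c0 m1 a1 * cw1 - cp G c0 m1 a2 * cw2
        - cp G c0 m1 a3 * cw3 - cp G c0 m1 a4 * cw4 - cp G c0 m1 a5 * cw5
    have EC : conj ε * cp G m1 m2 a0 * (cp G c0 m1 a0 + cp G c0 m1 a1 + cp G c0 m1 a2 +
        cp G c0 m1 a3) + conj β * cp G m1 m2 a4 * (cp G c0 m1 a4 + cp G c0 m1 a5) = 0 := by
      linear_combination hE4 + ch4 a0 + ch4 a1 + ch4 a2 + ch4 a3 + ch4 a4 + ch4 a5
        - cp G c1 m1 a1 * v1 - cp G c1 m1 a2 * v2 - cp G c1 m1 a3 * v3 - cp G c1 m1 a5 * v5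
        + cp G m1 m2 a0 * ch3 a0 + cp G m1 m2 a0 * ch3 a1 + (-cp G m1 m2 a0) * ch3 a2
        + (-cp G m1 m2 a0) * ch3 a3 + cp G m1 m2 a4 * ch3 a4 + (-cp G m1 m2 a4) * ch3 a5
        - cp G m1 m2 a0 * cp G c0 m1 a0 * hco a0 - cp G m1 m2 a0 * cp G c0 m1 a1 * hco a1
        + cp G m1 m2 a0 * cp G c0 m1 a2 * hco a2 + cp G m1 m2 a0 * cp G c0 m1 a3 * hco a3
        - cp G m1 m2 a4 * cp G c0 m1 a4 * hco a4 + cp G m1 m2 a4 * cp G c0 m1 a5 * hco a5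
        - cp G m1 m2 a0 * cp G c0 m1 a0 * cw0 - cp G m1 m2 a0 * cp G c0 m1 a1 * cw1
        + cp G m1 m2 a0 * cp G c0 m1 a2 * cw2 + cp G m1 m2 a0 * cp G c0 m1 a3 * cw3
        - cp G m1 m2 a4 * cp G c0 m1 a4 * cw4 + cp G m1 m2 a4 * cp G c0 m1 a5 * cw5
    have D1 : (cp G m1 m2 a4 * conj ε - cp G m1 m2 a0 * conj β) *
        (cp G c0 m1 a4 - cp G c0 m1 a5) = 0 := by
      linear_combination conj ε * EA - cp G m1 m2 a0 * EB
    have D2 : (cp G m1 m2 a4 * conj β - cp G m1 m2 a0 * conj ε) *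
        (cp G c0 m1 a4 + cp G c0 m1 a5) = 0 := by
      linear_combination EC - conj ε * cp G m1 m2 a0 * hE1'
    have hP' : rp G a4 a5 m1 + rp G a4 a5 m2 = 0 := hP45
    have e45' : rp G a4 a5 c0 + rp G a4 a5 c1 = 0 := e45
    rcases mul_eq_zero.mp D1 with hX1 | hY
    · rcases mul_eq_zero.mp D2 with hX2 | hF
      · -- contradiction : s4 = ±s0
        exfalso
        have εu := cp_unit hG1 c0 c1 a0
        rw [ht0] at εu
        have βu := cp_unit hG1 c0 c1 a4
        rw [ht4] at βu
        have hsq : (cp G m1 m2 a4 - cp G m1 m2 a0) * (cp G m1 m2 a4 + cp G m1 m2 a0) *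
            (conj ε * conj β) = 0 := by
          linear_combination (cp G m1 m2 a4 * conj β) * hX1 + (cp G m1 m2 a0 * conj β) * hX2
        have hεne : conj ε ≠ 0 := by
          intro h0
          rw [h0, mul_zero] at εu
          exact one_ne_zero εu.symm
        have hβne : conj β ≠ 0 := by
          intro h0
          rw [h0, mul_zero] at βu
          exact one_ne_zero βu.symm
        rcases mul_eq_zero.mp hsq with h' | h'
        · rcases mul_eq_zero.mp h' with h'' | h''
          · exact h45a (by linear_combination h'')
          · exact h45b (by linear_combination h'')
        · rcases mul_eq_zero.mp h' with h'' | h''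
          · exact hεne h''
          · exact hβne h''
      · -- g4 = -g5 : pair (a4,a5) cancels on (c0,m1); five column pairs
        have hsub2 : IsSubCHM G a4 a5 c0 m1 := cp_to_sub hG1 (by linear_combination hF)
        have hsub2' : rp G a4 a5 c0 + rp G a4 a5 m1 = 0 := hsub2
        have e5' : IsSubCHM G a4 a5 c1 m2 := by
          show rp G a4 a5 c1 + rp G a4 a5 m2 = 0
          linear_combination e45' + hP' - hsub2'
        exact exit_five hG1 hG2 a0 a1 a2 a3 a4 a5 r01 r02 r03 r04 r05 r12 r13 r14 r15
          r23 r24 r25 r34 r35 r45 c0 c1 hc01 e02 e03 e12 e13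
          c0 c1 m1 m2 m3 m4 c0 m1 c1 m2 hc01 hm12 hm34 hcm1 hdm2 e45 hP45 hQ45 hsub2 e5'
          (oq_ne (by rintro ⟨h1, h2⟩; exact hcm1 h1) (by rintro ⟨h1, h2⟩; exact hcm2 h1))
          (oq_ne (by rintro ⟨h1, h2⟩; exact hcm3 h1) (by rintro ⟨h1, h2⟩; exact hcm4 h1))
          (oq_ne (by rintro ⟨h1, h2⟩; exact hdm1 h2) (by rintro ⟨h1, h2⟩; exact hcm1 h1))
          (oq_ne (by rintro ⟨h1, h2⟩; exact hc01 h1) (by rintro ⟨h1, h2⟩; exact hcm2 h1))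
          (oq_ne (by rintro ⟨h1, h2⟩; exact hm13 h1) (by rintro ⟨h1, h2⟩; exact hm14 h1))
          (oq_ne (by rintro ⟨h1, h2⟩; exact hcm1 h1.symm) (by rintro ⟨h1, h2⟩; exact hcm2 h2.symm))
          (oq_ne (by rintro ⟨h1, h2⟩; exact hdm1 h1.symm) (by rintro ⟨h1, h2⟩; exact hdm2 h2.symm))
          (oq_ne (by rintro ⟨h1, h2⟩; exact hcm3 h1.symm) (by rintro ⟨h1, h2⟩; exact hm13 h1.symm))
          (oq_ne (by rintro ⟨h1, h2⟩; exact hdm3 h1.symm) (by rintro ⟨h1, h2⟩; exact hm23 h1.symm))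
          (oq_ne (by rintro ⟨h1, h2⟩; exact hc01 h1) (by rintro ⟨h1, h2⟩; exact hdm1 h2.symm))
    · -- g4 = g5 : rp (a4,a5) coincidence c0 ↔ m1 ; five column pairs
      have hrp : rp G a4 a5 c0 = rp G a4 a5 m1 :=
        cp_eq_to_rp hG1 (k := c0) (l := m1) (by linear_combination hY)
      have e4 : IsSubCHM G a4 a5 c0 m2 := by
        show rp G a4 a5 c0 + rp G a4 a5 m2 = 0
        linear_combination hP' + hrp
      have e5 : IsSubCHM G a4 a5 c1 m1 := by
        show rp G a4 a5 c1 + rp G a4 a5 m1 = 0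
        linear_combination e45' - hrp
      exact exit_five hG1 hG2 a0 a1 a2 a3 a4 a5 r01 r02 r03 r04 r05 r12 r13 r14 r15
        r23 r24 r25 r34 r35 r45 c0 c1 hc01 e02 e03 e12 e13
        c0 c1 m1 m2 m3 m4 c0 m2 c1 m1 hc01 hm12 hm34 hcm2 hdm1 e45 hP45 hQ45 e4 e5
        (oq_ne (by rintro ⟨h1, h2⟩; exact hcm1 h1) (by rintro ⟨h1, h2⟩; exact hcm2 h1))
        (oq_ne (by rintro ⟨h1, h2⟩; exact hcm3 h1) (by rintro ⟨h1, h2⟩; exact hcm4 h1))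
        (oq_ne (by rintro ⟨h1, h2⟩; exact hdm2 h2) (by rintro ⟨h1, h2⟩; exact hcm2 h1))
        (oq_ne (by rintro ⟨h1, h2⟩; exact hc01 h1) (by rintro ⟨h1, h2⟩; exact hcm1 h1))
        (oq_ne (by rintro ⟨h1, h2⟩; exact hm13 h1) (by rintro ⟨h1, h2⟩; exact hm14 h1))
        (oq_ne (by rintro ⟨h1, h2⟩; exact hcm1 h1.symm) (by rintro ⟨h1, h2⟩; exact hm12 h1))
        (oq_ne (by rintro ⟨h1, h2⟩; exact hdm1 h1.symm) (by rintro ⟨h1, h2⟩; exact hdm2 h2.symm))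
        (oq_ne (by rintro ⟨h1, h2⟩; exact hcm3 h1.symm) (by rintro ⟨h1, h2⟩; exact hm23 h1.symm))
        (oq_ne (by rintro ⟨h1, h2⟩; exact hdm3 h1.symm) (by rintro ⟨h1, h2⟩; exact hm13 h1.symm))
        (oq_ne (by rintro ⟨h1, h2⟩; exact hc01 h1) (by rintro ⟨h1, h2⟩; exact hcm1 h1))
  · -- generic case : s1 ≠ ± s0
    have hrow := hG2 a0 a3 r03
    rw [sum_six (fun k => G a0 k * conj (G a3 k)) c0 c1 m1 m2 m3 m4 hc01 hcm1 hcm2 hcm3 hcm4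
      hdm1 hdm2 hdm3 hdm4 hm12 hm13 hm14 hm23 hm24 hm34] at hrow
    have e03' : rp G a0 a3 c0 + rp G a0 a3 c1 = 0 := e03
    have h4 : rp G a0 a3 m1 + rp G a0 a3 m2 + rp G a0 a3 m3 + rp G a0 a3 m4 = 0 := by
      linear_combination hrow - e03'
    have hu : ∀ m, rp G a0 a3 m * conj (rp G a0 a3 m) = 1 :=
      fun m => unit_mul (hG1 a0 m) (hG1 a3 m)
    rcases four_units (hu m1) (hu m2) (hu m3) (hu m4) h4 with hc | hc | hc
    · -- (a0,a3) cancels on (m1,m2) : contradiction with s1 ≠ s0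
      exfalso
      have : cp G m1 m2 a0 + cp G m1 m2 a3 = 0 := by
        refine sub_to_cp hG1 ?_
        show rp G a0 a3 m1 + rp G a0 a3 m2 = 0
        linear_combination hc
      exact hEq (by linear_combination hs13 - this)
    · -- (a0,a3) cancels on (m1,m3) : stage3
      have hu2 : IsSubCHM G a0 a3 m1 m3 := by
        show rp G a0 a3 m1 + rp G a0 a3 m3 = 0
        linear_combination hc
      exact stage3 hG1 hG2 hG3 a0 a1 a2 a3 a4 a5 r01 r02 r03 r04 r05 r12 r13 r14 r15
        r23 r24 r25 r34 r35 r45 c0 c1 m1 m2 m3 m4 hc01 hcm1 hcm2 hcm3 hcm4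
        hdm1 hdm2 hdm3 hdm4 hm12 hm13 hm14 hm23 hm24 hm34 ε β ht0 ht1 ht2 ht3 ht4 ht5
        hP45 hQ45 hu2
    · -- (a0,a3) cancels on (m1,m4) : stage3 with m3 ↔ m4
      have hu2 : IsSubCHM G a0 a3 m1 m4 := by
        show rp G a0 a3 m1 + rp G a0 a3 m4 = 0
        linear_combination hc
      exact stage3 hG1 hG2 hG3 a0 a1 a2 a3 a4 a5 r01 r02 r03 r04 r05 r12 r13 r14 r15
        r23 r24 r25 r34 r35 r45 c0 c1 m1 m2 m4 m3 hc01 hcm1 hcm2 hcm4 hcm3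
        hdm1 hdm2 hdm4 hdm3 hm12 hm14 hm13 hm24 hm23 (Ne.symm hm34) ε β ht0 ht1 ht2 ht3 ht4 ht5
        hP45 (isSubCHM_colswap hQ45) hu2

/-- after the partition `{P, Q}` of the remaining columns for the pair `(a4,a5)`. -/
lemma afterP (hG1 : ∀ i j, G i j * conj (G i j) = 1)
    (hG2 : ∀ i j, i ≠ j → ∑ k, G i k * conj (G j k) = 0)
    (hG3 : ∀ k l, k ≠ l → ∑ i, G i k * conj (G i l) = 0)
    (a0 a1 a2 a3 a4 a5 : Fin 6)
    (r01 : a0 ≠ a1) (r02 : a0 ≠ a2) (r03 : a0 ≠ a3) (r04 : a0 ≠ a4) (r05 : a0 ≠ a5)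
    (r12 : a1 ≠ a2) (r13 : a1 ≠ a3) (r14 : a1 ≠ a4) (r15 : a1 ≠ a5)
    (r23 : a2 ≠ a3) (r24 : a2 ≠ a4) (r25 : a2 ≠ a5)
    (r34 : a3 ≠ a4) (r35 : a3 ≠ a5) (r45 : a4 ≠ a5)
    (c0 c1 m1 m2 m3 m4 : Fin 6)
    (hc01 : c0 ≠ c1) (hcm1 : c0 ≠ m1) (hcm2 : c0 ≠ m2) (hcm3 : c0 ≠ m3) (hcm4 : c0 ≠ m4)
    (hdm1 : c1 ≠ m1) (hdm2 : c1 ≠ m2) (hdm3 : c1 ≠ m3) (hdm4 : c1 ≠ m4)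
    (hm12 : m1 ≠ m2) (hm13 : m1 ≠ m3) (hm14 : m1 ≠ m4)
    (hm23 : m2 ≠ m3) (hm24 : m2 ≠ m4) (hm34 : m3 ≠ m4)
    (ε β : ℂ)
    (ht0 : cp G c0 c1 a0 = ε) (ht1 : cp G c0 c1 a1 = ε)
    (ht2 : cp G c0 c1 a2 = -ε) (ht3 : cp G c0 c1 a3 = -ε)
    (ht4 : cp G c0 c1 a4 = β) (ht5 : cp G c0 c1 a5 = -β)
    (hP45 : IsSubCHM G a4 a5 m1 m2) (hQ45 : IsSubCHM G a4 a5 m3 m4) :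
    17 ≤ numSubCHM G := by
  have e02 : IsSubCHM G a0 a2 c0 c1 := cp_to_sub hG1 (by rw [ht0, ht2]; ring)
  have e03 : IsSubCHM G a0 a3 c0 c1 := cp_to_sub hG1 (by rw [ht0, ht3]; ring)
  have e12 : IsSubCHM G a1 a2 c0 c1 := cp_to_sub hG1 (by rw [ht1, ht2]; ring)
  have e13 : IsSubCHM G a1 a3 c0 c1 := cp_to_sub hG1 (by rw [ht1, ht3]; ring)
  have e45 : IsSubCHM G a4 a5 c0 c1 := cp_to_sub hG1 (by rw [ht4, ht5]; ring)
  have hP45cp : cp G m1 m2 a4 + cp G m1 m2 a5 = 0 := sub_to_cp hG1 hP45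
  have hsum := hG3 m1 m2 hm12
  rw [sum_six (fun i => G i m1 * conj (G i m2)) a0 a1 a2 a3 a4 a5 r01 r02 r03 r04 r05
    r12 r13 r14 r15 r23 r24 r25 r34 r35 r45] at hsum
  have h4 : cp G m1 m2 a0 + cp G m1 m2 a1 + cp G m1 m2 a2 + cp G m1 m2 a3 = 0 := by
    linear_combination hsum - hP45cp
  rcases four_units (cp_unit hG1 m1 m2 a0) (cp_unit hG1 m1 m2 a1)
      (cp_unit hG1 m1 m2 a2) (cp_unit hG1 m1 m2 a3) h4 with hc | hc | hc
  · -- s1 = -s0 : extra pair (a0,a1) on (m1,m2)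
    have eX : IsSubCHM G a0 a1 m1 m2 := cp_to_sub hG1 (by linear_combination hc)
    exact exit_six hG1 hG2 a0 a1 a2 a3 a4 a5 r01 r02 r03 r04 r05 r12 r13 r14 r15
      r23 r24 r25 r34 r35 r45 c0 c1 hc01 e02 e03 e12 e13 e45 a0 a1 r01 m1 m2 hm12 eX
      (oq_ne (by rintro ⟨h1, h2⟩; exact r12 h2.symm) (by rintro ⟨h1, h2⟩; exact r01 h1))
      (oq_ne (by rintro ⟨h1, h2⟩; exact r13 h2.symm) (by rintro ⟨h1, h2⟩; exact r01 h1))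
      (oq_ne (by rintro ⟨h1, h2⟩; exact r01 h1.symm) (by rintro ⟨h1, h2⟩; exact r02 h2.symm))
      (oq_ne (by rintro ⟨h1, h2⟩; exact r01 h1.symm) (by rintro ⟨h1, h2⟩; exact r03 h2.symm))
      (oq_ne (by rintro ⟨h1, h2⟩; exact r04 h1.symm) (by rintro ⟨h1, h2⟩; exact r14 h1.symm))
  · -- s2 = -s0 : main ordering
    have hs02 : cp G m1 m2 a0 + cp G m1 m2 a2 = 0 := by linear_combination hc
    have hs13 : cp G m1 m2 a1 + cp G m1 m2 a3 = 0 := by linear_combination h4 - hc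
    exact afterS hG1 hG2 hG3 a0 a1 a2 a3 a4 a5 r01 r02 r03 r04 r05 r12 r13 r14 r15
      r23 r24 r25 r34 r35 r45 c0 c1 m1 m2 m3 m4 hc01 hcm1 hcm2 hcm3 hcm4
      hdm1 hdm2 hdm3 hdm4 hm12 hm13 hm14 hm23 hm24 hm34 ε β ht0 ht1 ht2 ht3 ht4 ht5
      hP45 hQ45 hs02 hs13
  · -- s3 = -s0 : swap a2 ↔ a3
    have hs03 : cp G m1 m2 a0 + cp G m1 m2 a3 = 0 := by linear_combination hc
    have hs12 : cp G m1 m2 a1 + cp G m1 m2 a2 = 0 := by linear_combination h4 - hc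
    exact afterS hG1 hG2 hG3 a0 a1 a3 a2 a4 a5 r01 r03 r02 r04 r05 r13 r12 r14 r15
      (Ne.symm r23) r34 r35 r24 r25 r45 c0 c1 m1 m2 m3 m4 hc01 hcm1 hcm2 hcm3 hcm4
      hdm1 hdm2 hdm3 hdm4 hm12 hm13 hm14 hm23 hm24 hm34 ε β ht0 ht1 ht3 ht2 ht4 ht5
      hP45 hQ45 hs03 hs12

/-- the main case analysis from the column-pair pattern `(ε,ε,-ε,-ε,β,-β)`. -/
lemma fromPattern (hG1 : ∀ i j, G i j * conj (G i j) = 1)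
    (hG2 : ∀ i j, i ≠ j → ∑ k, G i k * conj (G j k) = 0)
    (hG3 : ∀ k l, k ≠ l → ∑ i, G i k * conj (G i l) = 0)
    (a0 a1 a2 a3 a4 a5 : Fin 6)
    (r01 : a0 ≠ a1) (r02 : a0 ≠ a2) (r03 : a0 ≠ a3) (r04 : a0 ≠ a4) (r05 : a0 ≠ a5)
    (r12 : a1 ≠ a2) (r13 : a1 ≠ a3) (r14 : a1 ≠ a4) (r15 : a1 ≠ a5)
    (r23 : a2 ≠ a3) (r24 : a2 ≠ a4) (r25 : a2 ≠ a5)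
    (r34 : a3 ≠ a4) (r35 : a3 ≠ a5) (r45 : a4 ≠ a5)
    (c0 c1 : Fin 6) (hc01 : c0 ≠ c1)
    (ε β : ℂ)
    (ht0 : cp G c0 c1 a0 = ε) (ht1 : cp G c0 c1 a1 = ε)
    (ht2 : cp G c0 c1 a2 = -ε) (ht3 : cp G c0 c1 a3 = -ε)
    (ht4 : cp G c0 c1 a4 = β) (ht5 : cp G c0 c1 a5 = -β) :
    17 ≤ numSubCHM G := by
  have e02 : IsSubCHM G a0 a2 c0 c1 := cp_to_sub hG1 (by rw [ht0, ht2]; ring)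
  have e03 : IsSubCHM G a0 a3 c0 c1 := cp_to_sub hG1 (by rw [ht0, ht3]; ring)
  have e12 : IsSubCHM G a1 a2 c0 c1 := cp_to_sub hG1 (by rw [ht1, ht2]; ring)
  have e13 : IsSubCHM G a1 a3 c0 c1 := cp_to_sub hG1 (by rw [ht1, ht3]; ring)
  have e45 : IsSubCHM G a4 a5 c0 c1 := cp_to_sub hG1 (by rw [ht4, ht5]; ring)
  by_cases hβ1 : β = ε
  · -- extra pair (a0, a5) on (c0,c1)
    have eX : IsSubCHM G a0 a5 c0 c1 := cp_to_sub hG1 (by rw [ht0, ht5, hβ1]; ring)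
    exact exit_six hG1 hG2 a0 a1 a2 a3 a4 a5 r01 r02 r03 r04 r05 r12 r13 r14 r15
      r23 r24 r25 r34 r35 r45 c0 c1 hc01 e02 e03 e12 e13 e45 a0 a5 r05 c0 c1 hc01 eX
      (oq_ne (by rintro ⟨h1, h2⟩; exact r25 h2) (by rintro ⟨h1, h2⟩; exact r05 h1))
      (oq_ne (by rintro ⟨h1, h2⟩; exact r35 h2) (by rintro ⟨h1, h2⟩; exact r05 h1))
      (oq_ne (by rintro ⟨h1, h2⟩; exact r01 h1.symm) (by rintro ⟨h1, h2⟩; exact r15 h1))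
      (oq_ne (by rintro ⟨h1, h2⟩; exact r01 h1.symm) (by rintro ⟨h1, h2⟩; exact r15 h1))
      (oq_ne (by rintro ⟨h1, h2⟩; exact r04 h1.symm) (by rintro ⟨h1, h2⟩; exact r45 h1))
  by_cases hβ2 : β = -ε
  · -- extra pair (a0, a4) on (c0,c1)
    have eX : IsSubCHM G a0 a4 c0 c1 := cp_to_sub hG1 (by rw [ht0, ht4, hβ2]; ring)
    exact exit_six hG1 hG2 a0 a1 a2 a3 a4 a5 r01 r02 r03 r04 r05 r12 r13 r14 r15
      r23 r24 r25 r34 r35 r45 c0 c1 hc01 e02 e03 e12 e13 e45 a0 a4 r04 c0 c1 hc01 eX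
      (oq_ne (by rintro ⟨h1, h2⟩; exact r24 h2) (by rintro ⟨h1, h2⟩; exact r04 h1))
      (oq_ne (by rintro ⟨h1, h2⟩; exact r34 h2) (by rintro ⟨h1, h2⟩; exact r04 h1))
      (oq_ne (by rintro ⟨h1, h2⟩; exact r01 h1.symm) (by rintro ⟨h1, h2⟩; exact r14 h1))
      (oq_ne (by rintro ⟨h1, h2⟩; exact r01 h1.symm) (by rintro ⟨h1, h2⟩; exact r14 h1))
      (oq_ne (by rintro ⟨h1, h2⟩; exact r04 h1.symm) (by rintro ⟨h1, h2⟩; exact r05 h2.symm))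
  -- main case : find the partition of the remaining four columns for (a4,a5)
  obtain ⟨m1, m2, m3, m4, ⟨n1a, n1b, n2a, n2b, n3a, n3b, n4a, n4b⟩,
    d12, d13, d14, d23, d24, d34⟩ := exists_other_four c0 c1 hc01
  have hrow := hG2 a4 a5 r45
  rw [sum_six (fun k => G a4 k * conj (G a5 k)) c0 c1 m1 m2 m3 m4 hc01
    (Ne.symm n1a) (Ne.symm n2a) (Ne.symm n3a) (Ne.symm n4a)
    (Ne.symm n1b) (Ne.symm n2b) (Ne.symm n3b) (Ne.symm n4b)
    d12 d13 d14 d23 d24 d34] at hrow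
  have e45' : rp G a4 a5 c0 + rp G a4 a5 c1 = 0 := e45
  have h4 : rp G a4 a5 m1 + rp G a4 a5 m2 + rp G a4 a5 m3 + rp G a4 a5 m4 = 0 := by
    linear_combination hrow - e45'
  have hu : ∀ m, rp G a4 a5 m * conj (rp G a4 a5 m) = 1 :=
    fun m => unit_mul (hG1 a4 m) (hG1 a5 m)
  rcases four_units (hu m1) (hu m2) (hu m3) (hu m4) h4 with hc | hc | hc
  · have hP45 : IsSubCHM G a4 a5 m1 m2 := by
      show rp G a4 a5 m1 + rp G a4 a5 m2 = 0
      linear_combination hc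
    have hQ45 : IsSubCHM G a4 a5 m3 m4 := by
      show rp G a4 a5 m3 + rp G a4 a5 m4 = 0
      linear_combination h4 - hc
    exact afterP hG1 hG2 hG3 a0 a1 a2 a3 a4 a5 r01 r02 r03 r04 r05 r12 r13 r14 r15
      r23 r24 r25 r34 r35 r45 c0 c1 m1 m2 m3 m4 hc01 (Ne.symm n1a) (Ne.symm n2a)
      (Ne.symm n3a) (Ne.symm n4a) (Ne.symm n1b) (Ne.symm n2b) (Ne.symm n3b) (Ne.symm n4b)
      d12 d13 d14 d23 d24 d34 ε β ht0 ht1 ht2 ht3 ht4 ht5 hP45 hQ45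
  · have hP45 : IsSubCHM G a4 a5 m1 m3 := by
      show rp G a4 a5 m1 + rp G a4 a5 m3 = 0
      linear_combination hc
    have hQ45 : IsSubCHM G a4 a5 m2 m4 := by
      show rp G a4 a5 m2 + rp G a4 a5 m4 = 0
      linear_combination h4 - hc
    exact afterP hG1 hG2 hG3 a0 a1 a2 a3 a4 a5 r01 r02 r03 r04 r05 r12 r13 r14 r15
      r23 r24 r25 r34 r35 r45 c0 c1 m1 m3 m2 m4 hc01 (Ne.symm n1a) (Ne.symm n3a)
      (Ne.symm n2a) (Ne.symm n4a) (Ne.symm n1b) (Ne.symm n3b) (Ne.symm n2b) (Ne.symm n4b)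
      d13 d12 d14 (Ne.symm d23) d34 d24 ε β ht0 ht1 ht2 ht3 ht4 ht5 hP45 hQ45
  · have hP45 : IsSubCHM G a4 a5 m1 m4 := by
      show rp G a4 a5 m1 + rp G a4 a5 m4 = 0
      linear_combination hc
    have hQ45 : IsSubCHM G a4 a5 m2 m3 := by
      show rp G a4 a5 m2 + rp G a4 a5 m3 = 0
      linear_combination h4 - hc
    exact afterP hG1 hG2 hG3 a0 a1 a2 a3 a4 a5 r01 r02 r03 r04 r05 r12 r13 r14 r15
      r23 r24 r25 r34 r35 r45 c0 c1 m1 m4 m2 m3 hc01 (Ne.symm n1a) (Ne.symm n4a)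
      (Ne.symm n2a) (Ne.symm n3a) (Ne.symm n1b) (Ne.symm n4b) (Ne.symm n2b) (Ne.symm n3b)
      d14 d12 d13 (Ne.symm d24) (Ne.symm d34) d23 ε β ht0 ht1 ht2 ht3 ht4 ht5 hP45 hQ45

lemma pm_one {z : ℂ} (him : z.im = 0) (hu : z * conj z = 1) : z = 1 ∨ z = -1 := by
  have hc : conj z = z := Complex.conj_eq_iff_im.mpr him
  rw [hc] at hu
  have h2 : (z - 1) * (z + 1) = 0 := by linear_combination hu
  rcases mul_eq_zero.mp h2 with h | h
  · exact Or.inl (by linear_combination h)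
  · exact Or.inr (by linear_combination h)

lemma rank_le_one_col {B : Matrix (Fin 3) (Fin 2) ℂ} {v : ℂ}
    (h : ∀ i, B i 1 = v * B i 0) : B.rank ≤ 1 := by
  have key : ∀ w : Fin 2 → ℂ, B.mulVec w = (w 0 + v * w 1) • (fun i => B i 0) := by
    intro w
    funext i
    simp only [Matrix.mulVec, dotProduct, Fin.sum_univ_two, Pi.smul_apply, smul_eq_mul, h i]
    ring
  have hsub : LinearMap.range B.mulVecLin ≤ Submodule.span ℂ {fun i => B i 0} := by
    rintro x ⟨w, rfl⟩
    rw [Matrix.mulVecLin_apply, key w]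
    exact Submodule.smul_mem _ _ (Submodule.mem_span_singleton_self _)
  have h1 := Submodule.finrank_mono hsub
  have h2 : Module.finrank ℂ (Submodule.span ℂ ({fun i => B i 0} : Set (Fin 3 → ℂ))) ≤ 1 := by
    have := finrank_span_le_card (R := ℂ) ({fun i => B i 0} : Set (Fin 3 → ℂ))
    simpa using this
  have h3 : B.rank = Module.finrank ℂ (LinearMap.range B.mulVecLin) := rfl
  omega

/-- three rows with column-pair values `(e, e, -e)` give `N ≥ 17`. -/
lemma fromThree (hG1 : ∀ i j, G i j * conj (G i j) = 1)
    (hG2 : ∀ i j, i ≠ j → ∑ k, G i k * conj (G j k) = 0)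
    (hG3 : ∀ k l, k ≠ l → ∑ i, G i k * conj (G i l) = 0)
    (c0 c1 : Fin 6) (hc01 : c0 ≠ c1)
    (b0 b1 b2 : Fin 6) (h01 : b0 ≠ b1) (h02 : b0 ≠ b2) (h12 : b1 ≠ b2)
    (ev : ℂ) (hv0 : cp G c0 c1 b0 = ev) (hv1 : cp G c0 c1 b1 = ev)
    (hv2 : cp G c0 c1 b2 = -ev) :
    17 ≤ numSubCHM G := by
  obtain ⟨d, f, g, ⟨hd0, hd1, hd2, hf0, hf1, hf2, hg0, hg1, hg2⟩, hdf, hdg, hfg⟩ :=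
    exists_other_three b0 b1 b2 h01 h02 h12
  have S6 := hG3 c0 c1 hc01
  rw [sum_six (fun i => G i c0 * conj (G i c1)) b0 b1 b2 d f g h01 h02 (Ne.symm hd0)
    (Ne.symm hf0) (Ne.symm hg0) h12 (Ne.symm hd1) (Ne.symm hf1) (Ne.symm hg1)
    (Ne.symm hd2) (Ne.symm hf2) (Ne.symm hg2) hdf hdg hfg] at S6
  have hsum4 : ev + cp G c0 c1 d + cp G c0 c1 f + cp G c0 c1 g = 0 := by
    linear_combination S6 - hv0 - hv1 - hv2
  have ue : ev * conj ev = 1 := by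
    have := cp_unit hG1 c0 c1 b0
    rw [hv0] at this
    exact this
  rcases four_units ue (cp_unit hG1 c0 c1 d) (cp_unit hG1 c0 c1 f)
      (cp_unit hG1 c0 c1 g) hsum4 with hc | hc | hc
  · exact fromPattern hG1 hG2 hG3 b0 b1 b2 d f g h01 h02 (Ne.symm hd0) (Ne.symm hf0)
      (Ne.symm hg0) h12 (Ne.symm hd1) (Ne.symm hf1) (Ne.symm hg1) (Ne.symm hd2)
      (Ne.symm hf2) (Ne.symm hg2) hdf hdg hfg c0 c1 hc01 ev (cp G c0 c1 f)
      hv0 hv1 hv2 (by linear_combination hc) rfl (by linear_combination hsum4 - hc)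
  · exact fromPattern hG1 hG2 hG3 b0 b1 b2 f d g h01 h02 (Ne.symm hf0) (Ne.symm hd0)
      (Ne.symm hg0) h12 (Ne.symm hf1) (Ne.symm hd1) (Ne.symm hg1) (Ne.symm hf2)
      (Ne.symm hd2) (Ne.symm hg2) (Ne.symm hdf) hfg hdg c0 c1 hc01 ev (cp G c0 c1 d)
      hv0 hv1 hv2 (by linear_combination hc) rfl (by linear_combination hsum4 - hc)
  · exact fromPattern hG1 hG2 hG3 b0 b1 b2 g d f h01 h02 (Ne.symm hg0) (Ne.symm hd0)
      (Ne.symm hf0) h12 (Ne.symm hg1) (Ne.symm hd1) (Ne.symm hf1) (Ne.symm hg2)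
      (Ne.symm hd2) (Ne.symm hf2) (Ne.symm hdg) (Ne.symm hfg) hdf c0 c1 hc01 ev
      (cp G c0 c1 d) hv0 hv1 hv2 (by linear_combination hc) rfl
      (by linear_combination hsum4 - hc)

/-- a CHM with a real 3×2 submatrix of rank two has at least 17 sub-CHMs. -/
lemma fromReal (hG1 : ∀ i j, G i j * conj (G i j) = 1)
    (hG2 : ∀ i j, i ≠ j → ∑ k, G i k * conj (G j k) = 0)
    (hG3 : ∀ k l, k ≠ l → ∑ i, G i k * conj (G i l) = 0)
    (hR : HasReal3x2Rank2 G) : 17 ≤ numSubCHM G := by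
  obtain ⟨r, c, hrinj, hcinj, hre, hrank⟩ := hR
  have hc01 : c 0 ≠ c 1 := fun h => absurd (hcinj h) (by decide)
  have hr01 : r 0 ≠ r 1 := fun h => absurd (hrinj h) (by decide)
  have hr02 : r 0 ≠ r 2 := fun h => absurd (hrinj h) (by decide)
  have hr12 : r 1 ≠ r 2 := fun h => absurd (hrinj h) (by decide)
  have hconj : ∀ i j, conj (G (r i) (c j)) = G (r i) (c j) :=
    fun i j => Complex.conj_eq_iff_im.mpr (hre i j)
  have hx2 : ∀ i j, G (r i) (c j) * G (r i) (c j) = 1 := by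
    intro i j
    have := hG1 (r i) (c j)
    rwa [hconj i j] at this
  have hcp : ∀ i, cp G (c 0) (c 1) (r i) = G (r i) (c 0) * G (r i) (c 1) := by
    intro i
    show G (r i) (c 0) * conj (G (r i) (c 1)) = _
    rw [hconj i 1]
  have hpm : ∀ i, cp G (c 0) (c 1) (r i) = 1 ∨ cp G (c 0) (c 1) (r i) = -1 := by
    intro i
    rw [hcp i]
    rcases pm_one (hre i 0) (hG1 (r i) (c 0)) with h | h <;>
      rcases pm_one (hre i 1) (hG1 (r i) (c 1)) with h' | h' <;> rw [h, h'] <;> norm_num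
  -- if all three values agree we contradict rank = 2
  have hnotall : ∀ v : ℂ, (∀ i, cp G (c 0) (c 1) (r i) = v) → False := by
    intro v hall
    have hcol : ∀ i : Fin 3, (Matrix.of fun i j => G (r i) (c j)) i 1 =
        v * (Matrix.of fun i j => G (r i) (c j)) i 0 := by
      intro i
      have hv := hall i
      rw [hcp i] at hv
      show G (r i) (c 1) = v * G (r i) (c 0)
      linear_combination G (r i) (c 0) * hv - G (r i) (c 1) * hx2 i 0
    have := rank_le_one_col hcol
    omega
  rcases hpm 0 with p0 | p0 <;> rcases hpm 1 with p1 | p1 <;> rcases hpm 2 with p2 | p2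
  · exact (hnotall 1 (fun i => by fin_cases i <;> assumption)).elim
  · exact fromThree hG1 hG2 hG3 (c 0) (c 1) hc01 (r 0) (r 1) (r 2) hr01 hr02 hr12 1
      p0 p1 (by norm_num [p2])
  · exact fromThree hG1 hG2 hG3 (c 0) (c 1) hc01 (r 0) (r 2) (r 1) hr02 hr01
      (Ne.symm hr12) 1 p0 p2 (by norm_num [p1])
  · exact fromThree hG1 hG2 hG3 (c 0) (c 1) hc01 (r 1) (r 2) (r 0) hr12 (Ne.symm hr01)
      (Ne.symm hr02) (-1) p1 p2 (by norm_num [p0])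
  · exact fromThree hG1 hG2 hG3 (c 0) (c 1) hc01 (r 1) (r 2) (r 0) hr12 (Ne.symm hr01)
      (Ne.symm hr02) 1 p1 p2 (by norm_num [p0])
  · exact fromThree hG1 hG2 hG3 (c 0) (c 1) hc01 (r 0) (r 2) (r 1) hr02 hr01
      (Ne.symm hr12) (-1) p0 p2 (by norm_num [p1])
  · exact fromThree hG1 hG2 hG3 (c 0) (c 1) hc01 (r 0) (r 1) (r 2) hr01 hr02 hr12 (-1)
      p0 p1 (by norm_num [p2])
  · exact (hnotall (-1) (fun i => by fin_cases i <;> assumption)).elim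

lemma diag_unit {D : Matrix (Fin 6) (Fin 6) ℂ} (hD : IsDiagUnitary D) (i : Fin 6) :
    D i i * conj (D i i) = 1 := by
  obtain ⟨hdiag, hu⟩ := hD
  have h1 : D * D.conjTranspose = 1 := by
    have := Matrix.mem_unitaryGroup_iff.mp hu
    simpa [Matrix.star_eq_conjTranspose] using this
  have h2 := congrFun (congrFun h1 i) i
  rw [Matrix.mul_apply] at h2
  rw [Finset.sum_eq_single i ?_ ?_] at h2
  · simpa [Matrix.conjTranspose_apply] using h2
  · intro k _ hk
    rw [hdiag (Ne.symm hk), zero_mul]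
  · intro h
    exact absurd (Finset.mem_univ i) h

lemma equiv_data {H G : Matrix (Fin 6) (Fin 6) ℂ} (he : ComplexEquiv H G) :
    ∃ (d1 d2 : Fin 6 → ℂ) (σ1 σ2 : Equiv.Perm (Fin 6)),
      (∀ i, d1 i * conj (d1 i) = 1) ∧ (∀ j, d2 j * conj (d2 j) = 1) ∧
      (∀ i j, G i j = d1 i * H (σ1 i) (σ2 j) * d2 j) := by
  obtain ⟨D1, P1, P2, D2, hD1, hD2, hP1, hP2, heq⟩ := he
  obtain ⟨σ1, hσ1⟩ := hP1
  obtain ⟨τ, hτ⟩ := hP2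
  refine ⟨fun i => D1 i i, fun j => D2 j j, σ1, τ.symm, fun i => diag_unit hD1 i,
    fun j => diag_unit hD2 j, ?_⟩
  have e1 : ∀ (M : Matrix (Fin 6) (Fin 6) ℂ) i j, (D1 * M) i j = D1 i i * M i j := by
    intro M i j
    rw [Matrix.mul_apply]
    rw [Finset.sum_eq_single i ?_ ?_]
    · intro k _ hk
      rw [hD1.1 (Ne.symm hk), zero_mul]
    · intro h
      exact absurd (Finset.mem_univ i) h
  have e2 : ∀ (M : Matrix (Fin 6) (Fin 6) ℂ) i j, (M * D2) i j = M i j * D2 j j := by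
    intro M i j
    rw [Matrix.mul_apply]
    rw [Finset.sum_eq_single j ?_ ?_]
    · intro k _ hk
      rw [hD2.1 hk, mul_zero]
    · intro h
      exact absurd (Finset.mem_univ j) h
  have e3 : ∀ (M : Matrix (Fin 6) (Fin 6) ℂ) i j, (P1 * M) i j = M (σ1 i) j := by
    intro M i j
    rw [Matrix.mul_apply]
    have : ∀ k, P1 i k * M k j = if σ1 i = k then M k j else 0 := by
      intro k
      rw [hσ1]
      split <;> simp
    simp_rw [this]
    rw [Finset.sum_ite_eq]
    simp
  have e4 : ∀ (M : Matrix (Fin 6) (Fin 6) ℂ) i j, (M * P2) i j = M i (τ.symm j) := by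
    intro M i j
    rw [Matrix.mul_apply]
    have : ∀ k, M i k * P2 k j = if k = τ.symm j then M i k else 0 := by
      intro k
      rw [hτ]
      by_cases h : τ k = j
      · have h' : k = τ.symm j := by rw [← h]; simp
        simp [h, h']
      · have h' : ¬(k = τ.symm j) := by
          intro h''
          apply h
          rw [h'']
          simp
        simp [h, h']
    simp_rw [this]
    rw [Finset.sum_ite_eq']
    simp
  intro i j
  rw [heq]
  rw [e2, e4]
  have : D1 * P1 * H = D1 * (P1 * H) := by rw [Matrix.mul_assoc]
  rw [this, e1, e3]

lemma chm_unit {H : Matrix (Fin 6) (Fin 6) ℂ} (hH : IsCHM H) (i j : Fin 6) :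
    H i j * conj (H i j) = 1 := by
  have h := hH.1 i j
  have := Complex.mul_conj (H i j)
  rw [this]
  rw [Complex.normSq_eq_norm_sq, h]
  norm_num

lemma chm_row {H : Matrix (Fin 6) (Fin 6) ℂ} (hH : IsCHM H) {i j : Fin 6} (hij : i ≠ j) :
    ∑ k, H i k * conj (H j k) = 0 := by
  have h := congrFun (congrFun hH.2 i) j
  rw [Matrix.mul_apply] at h
  simp only [Matrix.conjTranspose_apply, Complex.star_def] at h
  rw [h]
  simp [Matrix.smul_apply, Matrix.one_apply_ne hij]

lemma chm_col {H : Matrix (Fin 6) (Fin 6) ℂ} (hH : IsCHM H) {k l : Fin 6} (hkl : k ≠ l) :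
    ∑ i, H i k * conj (H i l) = 0 := by
  have h6 : H * ((1/6 : ℂ) • H.conjTranspose) = 1 := by
    rw [Matrix.mul_smul, hH.2, smul_smul]
    norm_num
  have hcomm := mul_eq_one_comm.mp h6
  have h := congrFun (congrFun hcomm k) l
  rw [Matrix.mul_apply] at h
  simp only [Matrix.smul_apply, Matrix.conjTranspose_apply, smul_eq_mul,
    Complex.star_def] at h
  have h' : ∑ m, conj (H m k) * H m l = 0 := by
    have hsum : (1/6 : ℂ) * ∑ m, conj (H m k) * H m l = (1 : Matrix (Fin 6) (Fin 6) ℂ) k l := by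
      rw [← h, Finset.mul_sum]
      congr 1
      funext m
      ring
    rw [Matrix.one_apply_ne hkl] at hsum
    field_simp at hsum
    simpa using hsum
  calc ∑ i, H i k * conj (H i l) = conj (∑ m, conj (H m k) * H m l) := by
        rw [map_sum]
        congr 1
        funext m
        rw [_root_.map_mul, Complex.conj_conj]
  _ = 0 := by rw [h', map_zero]

lemma transfer_facts {H G : Matrix (Fin 6) (Fin 6) ℂ} (hH : IsCHM H)
    {d1 d2 : Fin 6 → ℂ} {σ1 σ2 : Equiv.Perm (Fin 6)}
    (hd1 : ∀ i, d1 i * conj (d1 i) = 1) (hd2 : ∀ j, d2 j * conj (d2 j) = 1)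
    (hent : ∀ i j, G i j = d1 i * H (σ1 i) (σ2 j) * d2 j) :
    (∀ i j, G i j * conj (G i j) = 1) ∧
    (∀ i j, i ≠ j → ∑ k, G i k * conj (G j k) = 0) ∧
    (∀ k l, k ≠ l → ∑ i, G i k * conj (G i l) = 0) := by
  have hH1 := chm_unit hH
  refine ⟨?_, ?_, ?_⟩
  · intro i j
    rw [hent i j]
    simp only [_root_.map_mul]
    linear_combination (H (σ1 i) (σ2 j) * conj (H (σ1 i) (σ2 j)) * d2 j * conj (d2 j)) * hd1 i
      + (d2 j * conj (d2 j)) * hH1 (σ1 i) (σ2 j) + hd2 j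
  · intro i j hij
    have hterm : ∀ k, G i k * conj (G j k) =
        (d1 i * conj (d1 j)) * (H (σ1 i) (σ2 k) * conj (H (σ1 j) (σ2 k))) := by
      intro k
      rw [hent i k, hent j k]
      simp only [_root_.map_mul]
      linear_combination (d1 i * conj (d1 j) * H (σ1 i) (σ2 k) * conj (H (σ1 j) (σ2 k))) * hd2 k
    calc ∑ k, G i k * conj (G j k)
        = ∑ k, (d1 i * conj (d1 j)) * (H (σ1 i) (σ2 k) * conj (H (σ1 j) (σ2 k))) :=
          Finset.sum_congr rfl (fun k _ => hterm k)
      _ = (d1 i * conj (d1 j)) * ∑ k, H (σ1 i) (σ2 k) * conj (H (σ1 j) (σ2 k)) := by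
          rw [Finset.mul_sum]
      _ = (d1 i * conj (d1 j)) * ∑ m, H (σ1 i) m * conj (H (σ1 j) m) := by
          rw [Equiv.sum_comp σ2 (fun m => H (σ1 i) m * conj (H (σ1 j) m))]
      _ = 0 := by
          rw [chm_row hH (fun h => hij (σ1.injective h)), mul_zero]
  · intro k l hkl
    have hterm : ∀ i, G i k * conj (G i l) =
        (d2 k * conj (d2 l)) * (H (σ1 i) (σ2 k) * conj (H (σ1 i) (σ2 l))) := by
      intro i
      rw [hent i k, hent i l]
      simp only [_root_.map_mul]
      linear_combination (d2 k * conj (d2 l) * H (σ1 i) (σ2 k) * conj (H (σ1 i) (σ2 l))) * hd1 i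
    calc ∑ i, G i k * conj (G i l)
        = ∑ i, (d2 k * conj (d2 l)) * (H (σ1 i) (σ2 k) * conj (H (σ1 i) (σ2 l))) :=
          Finset.sum_congr rfl (fun i _ => hterm i)
      _ = (d2 k * conj (d2 l)) * ∑ i, H (σ1 i) (σ2 k) * conj (H (σ1 i) (σ2 l)) := by
          rw [Finset.mul_sum]
      _ = (d2 k * conj (d2 l)) * ∑ m, H m (σ2 k) * conj (H m (σ2 l)) := by
          rw [Equiv.sum_comp σ1 (fun m => H m (σ2 k) * conj (H m (σ2 l)))]
      _ = 0 := by
          rw [chm_col hH (fun h => hkl (σ2.injective h)), mul_zero]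

lemma count_le {H G : Matrix (Fin 6) (Fin 6) ℂ}
    {d1 d2 : Fin 6 → ℂ} {σ1 σ2 : Equiv.Perm (Fin 6)}
    (hd1 : ∀ i, d1 i * conj (d1 i) = 1) (hd2 : ∀ j, d2 j * conj (d2 j) = 1)
    (hent : ∀ i j, G i j = d1 i * H (σ1 i) (σ2 j) * d2 j) :
    numSubCHM G ≤ numSubCHM H := by
  rw [numSubCHM_eq, numSubCHM_eq]
  apply Finset.card_le_card_of_injOn
    (fun p => (oq (σ1 p.1.1) (σ1 p.1.2), oq (σ2 p.2.1) (σ2 p.2.2)))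
  · intro p hp
    obtain ⟨-, hlt1, hlt2, hsub⟩ := Finset.mem_filter.mp hp
    have hij : p.1.1 ≠ p.1.2 := ne_of_lt hlt1
    have hkl : p.2.1 ≠ p.2.2 := ne_of_lt hlt2
    have hne : d1 p.1.1 * conj (d1 p.1.2) ≠ 0 := by
      intro h0
      rcases mul_eq_zero.mp h0 with h | h
      · have := hd1 p.1.1
        rw [h, zero_mul] at this
        exact one_ne_zero this.symm
      · have := hd1 p.1.2
        rw [h, mul_zero] at this
        exact one_ne_zero this.symm
    have h : G p.1.1 p.2.1 * conj (G p.1.2 p.2.1) + G p.1.1 p.2.2 * conj (G p.1.2 p.2.2) = 0 :=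
      hsub
    rw [hent p.1.1 p.2.1, hent p.1.2 p.2.1, hent p.1.1 p.2.2, hent p.1.2 p.2.2] at h
    simp only [_root_.map_mul] at h
    have key : (d1 p.1.1 * conj (d1 p.1.2)) *
        (H (σ1 p.1.1) (σ2 p.2.1) * conj (H (σ1 p.1.2) (σ2 p.2.1)) +
         H (σ1 p.1.1) (σ2 p.2.2) * conj (H (σ1 p.1.2) (σ2 p.2.2))) = 0 := by
      linear_combination h
        - (d1 p.1.1 * conj (d1 p.1.2) *
            (H (σ1 p.1.1) (σ2 p.2.1) * conj (H (σ1 p.1.2) (σ2 p.2.1)))) * hd2 p.2.1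
        - (d1 p.1.1 * conj (d1 p.1.2) *
            (H (σ1 p.1.1) (σ2 p.2.2) * conj (H (σ1 p.1.2) (σ2 p.2.2)))) * hd2 p.2.2
    have hsubH : IsSubCHM H (σ1 p.1.1) (σ1 p.1.2) (σ2 p.2.1) (σ2 p.2.2) := by
      rcases mul_eq_zero.mp key with h' | h'
      · exact absurd h' hne
      · exact h'
    exact mem_S (fun h' => hij (σ1.injective h')) (fun h' => hkl (σ2.injective h')) hsubH
  · intro p hp q hq hpq
    obtain ⟨-, hp1, hp2, -⟩ := Finset.mem_filter.mp hp
    obtain ⟨-, hq1, hq2, -⟩ := Finset.mem_filter.mp hq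
    have h1 := congrArg Prod.fst hpq
    have h2 := congrArg Prod.snd hpq
    simp only at h1 h2
    have hrow : p.1.1 = q.1.1 ∧ p.1.2 = q.1.2 := by
      rcases oq_eq_or h1 with ⟨ha, hb⟩ | ⟨ha, hb⟩
      · exact ⟨σ1.injective ha, σ1.injective hb⟩
      · exfalso
        have e1 : p.1.1 = q.1.2 := σ1.injective ha
        have e2 : p.1.2 = q.1.1 := σ1.injective hb
        rw [e1, e2] at hp1
        exact absurd hq1 (not_lt.mpr (le_of_lt hp1))
    have hcol : p.2.1 = q.2.1 ∧ p.2.2 = q.2.2 := by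
      rcases oq_eq_or h2 with ⟨ha, hb⟩ | ⟨ha, hb⟩
      · exact ⟨σ2.injective ha, σ2.injective hb⟩
      · exfalso
        have e1 : p.2.1 = q.2.2 := σ2.injective ha
        have e2 : p.2.2 = q.2.1 := σ2.injective hb
        rw [e1, e2] at hp2
        exact absurd hq2 (not_lt.mpr (le_of_lt hp2))
    have hfst : p.1 = q.1 := Prod.ext hrow.1 hrow.2
    have hsnd : p.2 = q.2 := Prod.ext hcol.1 hcol.2
    exact Prod.ext hfst hsnd

end S13

/-- a 6×6 CHM that is complex equivalent to a matrix containing a 3×2 real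
submatrix of rank two has more than nine (hence at least seventeen) 2×2 sub-CHMs. -/
theorem stmt_13 (H : Matrix (Fin 6) (Fin 6) ℂ) (hH : IsCHM H)
    (hsub : ∃ G : Matrix (Fin 6) (Fin 6) ℂ, ComplexEquiv H G ∧ HasReal3x2Rank2 G) :
    9 < numSubCHM H ∧ 17 ≤ numSubCHM H := by
  obtain ⟨G, he, hR⟩ := hsub
  obtain ⟨d1, d2, σ1, σ2, hd1, hd2, hent⟩ := S13.equiv_data he
  obtain ⟨hG1, hG2, hG3⟩ := S13.transfer_facts hH hd1 hd2 hent
  have h17G : 17 ≤ numSubCHM G := S13.fromReal hG1 hG2 hG3 hR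
  have hle : numSubCHM G ≤ numSubCHM H := S13.count_le hd1 hd2 hent
  constructor <;> omega
end
end
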